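/- arXiv:math/0703387 — 8 statements merged into one kernel-verified Lean document; each statement's English description precedes it below -/
import Mathlib

section
/- For any normed space X over 𝕂 and any continuous symmetric n-linear form L on X, the norm of its diagonal (the associated n-homogeneous polynomial x ↦ L(x,...,x)) satisfies ‖L̂‖ ≤ ‖L‖ ≤ (n^n / n!) ‖L̂‖, where ‖L̂‖ = sup_{‖x‖≤1} |L(x,...,x)|. -/
/-!
The lower bound holds because each `‖L (x, …, x)‖` with `‖x‖ ≤ 1` is bounded by `‖L‖`.
The upper bound comes from the polarization formula
`∑_{ε ∈ {±1}ⁿ} (∏ εᵢ) L̂(∑ εᵢ xᵢ) = 2ⁿ ∑_σ L(x ∘ σ) = 2ⁿ n! L(x)`: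
expanding `L̂(∑ εᵢ xᵢ)` by multilinearity, a term `L(x ∘ r)` with `r` not surjective cancels
against the one obtained by flipping the sign `εᵢ` at some `i` outside the range of `r`, while for
a permutation `r` the sign factor is `(∏ εᵢ)² = 1`. For unit vectors `xᵢ` we have
`‖∑ εᵢ xᵢ‖ ≤ n`, so by homogeneity `|L̂(∑ εᵢ xᵢ)| ≤ nⁿ ‖L̂‖`, whence `2ⁿ n! |L(x)| ≤ 2ⁿ nⁿ ‖L̂‖`.
-/

open Finset Function

section SignVectors

variable {ι N : Type*} [Fintype ι] [DecidableEq ι] [AddCommGroup N]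

theorem sum_units_int_prod_mul_prod_comp_smul_of_not_surjective {r : ι → ι}
    (hr : ¬ Surjective r) (y : N) :
    ∑ ε : ι → ℤˣ, ((∏ i, ε i) * ∏ j, ε (r j)) • y = 0 := by
  obtain ⟨i, hi⟩ : ∃ i, ∀ j, r j ≠ i := by simpa [Surjective] using hr
  let flip : (ι → ℤˣ) → (ι → ℤˣ) := fun ε => ε * Pi.mulSingle i (-1)
  have prod_flip (ε : ι → ℤˣ) : ∏ k, flip ε k = -∏ k, ε k := by
    simp [flip, prod_mul_distrib]
  have prod_flip_comp (ε : ι → ℤˣ) : ∏ j, flip ε (r j) = ∏ j, ε (r j) := by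
    simp [flip, Pi.mulSingle_eq_of_ne (hi _)]
  refine sum_involution (fun ε _ => flip ε) (fun ε _ => ?_) (fun ε _ _ h => ?_)
    (fun _ _ => mem_univ _) (fun ε _ => ?_)
  · rw [prod_flip, prod_flip_comp, neg_mul, Units.neg_smul, add_neg_cancel]
  · simpa [flip] using congr_fun h i
  · simp [flip, mul_assoc, ← Pi.mulSingle_mul]

theorem sum_units_int_prod_mul_prod_comp_perm_smul (σ : Equiv.Perm ι) (y : N) :
    ∑ ε : ι → ℤˣ, ((∏ i, ε i) * ∏ j, ε (σ j)) • y = 2 ^ Fintype.card ι • y := by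
  simp [σ.prod_comp, Int.units_mul_self]

end SignVectors

theorem norm_units_int_smul {E : Type*} [SeminormedAddCommGroup E] (u : ℤˣ) (x : E) :
    ‖u • x‖ = ‖x‖ := by
  rcases Int.units_eq_one_or u with rfl | rfl <;> simp

namespace MultilinearMap

variable {R M N ι : Type*} [CommRing R] [AddCommGroup M] [Module R M] [AddCommGroup N]
  [Module R N] [Fintype ι]

theorem map_units_int_smul_univ (f : MultilinearMap R (fun _ : ι => M) N) (u : ι → ℤˣ)
    (m : ι → M) : f (fun i => u i • m i) = (∏ i, u i) • f m := by
  simp only [Units.smul_def, Units.coe_prod]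
  exact (f.restrictScalars ℤ).map_smul_univ (fun i => (u i : ℤ)) m

variable [DecidableEq ι]

theorem sum_units_int_smul_map_diag (f : MultilinearMap R (fun _ : ι => M) N) (x : ι → M) :
    ∑ ε : ι → ℤˣ, (∏ i, ε i) • f (fun _ => ∑ i, ε i • x i) =
      2 ^ Fintype.card ι • ∑ σ : Equiv.Perm ι, f (x ∘ σ) := by
  have not_surjective_of_notMem_range (r : ι → ι)
      (hr : r ∉ Set.range (⇑· : Equiv.Perm ι → ι → ι)) : ¬ Surjective r := fun hs =>
    hr ⟨Equiv.ofBijective r ⟨Finite.injective_iff_surjective.2 hs, hs⟩, rfl⟩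
  calc ∑ ε : ι → ℤˣ, (∏ i, ε i) • f (fun _ => ∑ i, ε i • x i)
      = ∑ r : ι → ι, ∑ ε : ι → ℤˣ, ((∏ i, ε i) * ∏ j, ε (r j)) • f (x ∘ r) := by
        simp_rw [f.map_sum, comp_def, map_units_int_smul_univ, smul_sum, mul_smul]
        exact sum_comm
    _ = ∑ σ : Equiv.Perm ι, ∑ ε : ι → ℤˣ, ((∏ i, ε i) * ∏ j, ε (σ j)) • f (x ∘ σ) :=
        (Fintype.sum_of_injective _ DFunLike.coe_injective _ _ (fun r hr =>
          sum_units_int_prod_mul_prod_comp_smul_of_not_surjective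
            (not_surjective_of_notMem_range r hr) _) fun _ => rfl).symm
    _ = 2 ^ Fintype.card ι • ∑ σ : Equiv.Perm ι, f (x ∘ σ) := by
        simp_rw [sum_units_int_prod_mul_prod_comp_perm_smul, smul_sum]

theorem sum_units_int_smul_map_diag_of_symm (f : MultilinearMap R (fun _ : ι => M) N)
    (hf : ∀ (σ : Equiv.Perm ι) (x : ι → M), f (x ∘ σ) = f x) (x : ι → M) :
    ∑ ε : ι → ℤˣ, (∏ i, ε i) • f (fun _ => ∑ i, ε i • x i) =
      (2 ^ Fintype.card ι * (Fintype.card ι).factorial) • f x := by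
  simp [sum_units_int_smul_map_diag, hf, mul_smul, Fintype.card_perm]

end MultilinearMap

section RCLike

variable {𝕜 E : Type*} [RCLike 𝕜] [NormedAddCommGroup E] [NormedSpace 𝕜 E]

theorem norm_smul_inv_norm_le_one (x : E) : ‖(‖x‖⁻¹ : 𝕜) • x‖ ≤ 1 := by
  rcases eq_or_ne x 0 with rfl | hx
  · simp
  · exact (norm_smul_inv_norm hx).le

theorem norm_smul_inv_norm_smul (x : E) : (‖x‖ : 𝕜) • (‖x‖⁻¹ : 𝕜) • x = x := by
  rcases eq_or_ne x 0 with rfl | hx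
  · simp
  · rw [smul_smul, mul_inv_cancel₀ (by simpa using hx), one_smul]

end RCLike

namespace ContinuousMultilinearMap

variable {𝕜 ι : Type*} [RCLike 𝕜] [Fintype ι]

theorem opNorm_le_of_forall_norm_le_one {E : ι → Type*} {G : Type*}
    [∀ i, NormedAddCommGroup (E i)] [∀ i, NormedSpace 𝕜 (E i)] [NormedAddCommGroup G]
    [NormedSpace 𝕜 G] (f : ContinuousMultilinearMap 𝕜 E G) {C : ℝ}
    (hf : ∀ m, (∀ i, ‖m i‖ ≤ 1) → ‖f m‖ ≤ C) : ‖f‖ ≤ C := by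
  refine f.opNorm_le_bound ((norm_nonneg _).trans (hf 0 fun i => by simp)) fun m => ?_
  have hm : m = fun i => (‖m i‖ : 𝕜) • (‖m i‖⁻¹ : 𝕜) • m i :=
    funext fun i => (norm_smul_inv_norm_smul (m i)).symm
  conv_lhs => rw [hm, f.map_smul_univ, norm_smul, norm_prod, mul_comm]
  simp only [RCLike.norm_ofReal, abs_norm]
  exact mul_le_mul_of_nonneg_right (hf _ fun i => norm_smul_inv_norm_le_one (m i))
    (by positivity)

variable {E G : Type*} [NormedAddCommGroup E] [NormedSpace 𝕜 E] [NormedAddCommGroup G]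
  [NormedSpace 𝕜 G]

/-- The norm `‖f̂‖` of the homogeneous polynomial `f̂ x = f (x, …, x)`. -/
noncomputable def diagNorm (f : ContinuousMultilinearMap 𝕜 (fun _ : ι => E) G) : ℝ :=
  sSup {y : ℝ | ∃ x : E, ‖x‖ ≤ 1 ∧ y = ‖f (fun _ => x)‖}

variable (f : ContinuousMultilinearMap 𝕜 (fun _ : ι => E) G)

theorem norm_map_diag_le_opNorm {x : E} (hx : ‖x‖ ≤ 1) : ‖f (fun _ => x)‖ ≤ ‖f‖ :=
  f.unit_le_opNorm ((pi_norm_const_le x).trans hx)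

theorem norm_map_diag_le_diagNorm {x : E} (hx : ‖x‖ ≤ 1) : ‖f (fun _ => x)‖ ≤ f.diagNorm :=
  le_csSup ⟨‖f‖, by rintro _ ⟨x, hx, rfl⟩; exact f.norm_map_diag_le_opNorm hx⟩ ⟨x, hx, rfl⟩

theorem diagNorm_nonneg : 0 ≤ f.diagNorm :=
  (norm_nonneg _).trans (f.norm_map_diag_le_diagNorm (x := 0) (by simp))

theorem diagNorm_le_opNorm : f.diagNorm ≤ ‖f‖ :=
  csSup_le ⟨_, 0, by simp, rfl⟩ fun _ ⟨_, hx, hy⟩ => hy ▸ f.norm_map_diag_le_opNorm hx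

theorem norm_map_diag_le (x : E) : ‖f (fun _ => x)‖ ≤ f.diagNorm * ‖x‖ ^ Fintype.card ι := by
  have hx : (fun _ : ι => x) = fun _ => (‖x‖ : 𝕜) • (‖x‖⁻¹ : 𝕜) • x :=
    funext fun _ => (norm_smul_inv_norm_smul x).symm
  rw [hx, f.map_smul_univ, norm_smul, prod_const, norm_pow, card_univ, mul_comm]
  simp only [RCLike.norm_ofReal, abs_norm]
  gcongr
  exact f.norm_map_diag_le_diagNorm (norm_smul_inv_norm_le_one x)

variable [DecidableEq ι]

theorem factorial_mul_norm_map_le_of_symm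
    (hf : ∀ (σ : Equiv.Perm ι) (x : ι → E), f (x ∘ σ) = f x) {m : ι → E}
    (hm : ∀ i, ‖m i‖ ≤ 1) :
    (Fintype.card ι).factorial * ‖f m‖ ≤ Fintype.card ι ^ Fintype.card ι * f.diagNorm := by
  set n := Fintype.card ι
  have norm_sum_le (ε : ι → ℤˣ) : ‖∑ i, ε i • m i‖ ≤ n := by
    simpa using norm_sum_le_of_le univ fun i _ => (norm_units_int_smul (ε i) (m i)).trans_le (hm i)
  have hpol := f.toMultilinearMap.sum_units_int_smul_map_diag_of_symm hf m
  simp only [coe_coe] at hpol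
  have key : ((2 ^ n * n.factorial : ℕ) : ℝ) * ‖f m‖ ≤ 2 ^ n * (f.diagNorm * n ^ n) :=
    calc ((2 ^ n * n.factorial : ℕ) : ℝ) * ‖f m‖
        = ‖∑ ε : ι → ℤˣ, (∏ i, ε i) • f (fun _ => ∑ i, ε i • m i)‖ := by
          rw [hpol, RCLike.norm_nsmul 𝕜, nsmul_eq_mul]
      _ ≤ ∑ _ε : ι → ℤˣ, f.diagNorm * n ^ n := by
          refine norm_sum_le_of_le _ fun ε _ => ?_
          rw [norm_units_int_smul]
          exact (f.norm_map_diag_le _).trans (mul_le_mul_of_nonneg_left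
            (pow_le_pow_left₀ (norm_nonneg _) (norm_sum_le ε) n) f.diagNorm_nonneg)
      _ = 2 ^ n * (f.diagNorm * n ^ n) := by simp [n]
  push_cast at key
  rw [mul_assoc] at key
  linarith [le_of_mul_le_mul_left key (by positivity)]

theorem opNorm_le_of_symm (hf : ∀ (σ : Equiv.Perm ι) (x : ι → E), f (x ∘ σ) = f x) :
    ‖f‖ ≤ Fintype.card ι ^ Fintype.card ι / (Fintype.card ι).factorial * f.diagNorm :=
  f.opNorm_le_of_forall_norm_le_one fun m hm => by
    rw [div_mul_eq_mul_div, le_div_iff₀ (by positivity), mul_comm]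
    exact f.factorial_mul_norm_map_le_of_symm hf hm

end ContinuousMultilinearMap

/-- The `‖L̂‖ ≤ ‖L‖ ≤ (n^n/n!)‖L̂‖` inequality for continuous symmetric n-linear forms. -/
theorem polarization_inequality {𝕜 X : Type*} [RCLike 𝕜] [NormedAddCommGroup X]
    [NormedSpace 𝕜 X] (n : ℕ)
    (L : ContinuousMultilinearMap 𝕜 (fun _ : Fin n => X) 𝕜)
    (hsymm : ∀ (σ : Equiv.Perm (Fin n)) (x : Fin n → X), L (x ∘ σ) = L x) :
    sSup {y : ℝ | ∃ x : X, ‖x‖ ≤ 1 ∧ y = ‖L (fun _ => x)‖} ≤ ‖L‖ ∧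
      ‖L‖ ≤ ((n : ℝ) ^ n / (Nat.factorial n : ℝ)) *
        sSup {y : ℝ | ∃ x : X, ‖x‖ ≤ 1 ∧ y = ‖L (fun _ => x)‖} := by
  have h := L.opNorm_le_of_symm hsymm
  rw [Fintype.card_fin] at h
  exact ⟨L.diagNorm_le_opNorm, h⟩
end

section
/- If H is a Hilbert space over 𝕂 and L is a continuous symmetric n-linear form on H, then ‖L‖ = ‖L̂‖, i.e., the norm of the symmetric multilinear form equals the sup-norm of its diagonal homogeneous polynomial on the unit ball (Banach's theorem). -/
/-!
On a finite-dimensional space, maximize `‖L‖` over tuples in the unit ball of `ι → E`, and among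
the maximizers pick `v` maximizing `‖∑ k, v k‖`. Its entries are unit vectors. If `v i ≠ v j`,
the symmetric bilinear form `B p q = L (v with p at i and q at j)` satisfies
`4 B (v i) (v j) = B s s - B d d` with `s = v i + v j`, `d = v i - v j`, and
`‖s‖² + ‖d‖² = 4`, so `B` attains the maximum on the diagonal at `e = s / ‖s‖`. As `‖s‖ < 2`,
putting `e` or `-e` at both `i` and `j` keeps `v` a maximizer but makes `‖∑ k, v k‖` larger.
Hence the entries of `v` coincide. A general tuple lives in the finite-dimensional span of its
entries.
-/

section

open Function Metric

theorem update_mem_closedBall_zero {ι : Type*} {E : ι → Type*} [Fintype ι] [DecidableEq ι]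
    [∀ i, SeminormedAddGroup (E i)] {v : ∀ i, E i} {r : ℝ} (hv : v ∈ closedBall 0 r) {i : ι}
    {p : E i} (hp : ‖p‖ ≤ r) : update v i p ∈ closedBall 0 r := by
  have hr : 0 ≤ r := (norm_nonneg _).trans hp
  rw [mem_closedBall_zero_iff, pi_norm_le_iff_of_nonneg hr] at hv ⊢
  intro k
  rcases eq_or_ne k i with rfl | hk
  · simpa using hp
  · simpa [update_of_ne hk] using hv k

theorem Finset.sum_update_eq_sub_add {ι M : Type*} [Fintype ι] [DecidableEq ι] [AddCommGroup M]
    (f : ι → M) (i : ι) (b : M) : ∑ k, update f i b k = ∑ k, f k - f i + b := by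
  rw [Finset.sum_update_of_mem (Finset.mem_univ i), Finset.sdiff_singleton_eq_erase,
    Finset.sum_erase_eq_sub (Finset.mem_univ i)]
  abel

namespace MultilinearMap

variable {R ι G : Type*} {M : ι → Type*} [CommSemiring R] [∀ i, AddCommMonoid (M i)]
  [∀ i, Module R (M i)] [AddCommMonoid G] [Module R G] [DecidableEq ι]

def toLinearMap₂ (f : MultilinearMap R M G) (v : ∀ i, M i) {i j : ι} (hij : i ≠ j) :
    M i →ₗ[R] M j →ₗ[R] G :=
  LinearMap.mk₂ R (fun p q => f (update (update v i p) j q))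
    (fun p p' q => by simp only [update_comm hij, f.map_update_add])
    (fun c p q => by simp only [update_comm hij, f.map_update_smul])
    (fun p q q' => f.map_update_add _ j q q')
    (fun c p q => f.map_update_smul _ j c q)

@[simp]
theorem toLinearMap₂_apply (f : MultilinearMap R M G) (v : ∀ i, M i) {i j : ι} (hij : i ≠ j)
    (p : M i) (q : M j) : f.toLinearMap₂ v hij p q = f (update (update v i p) j q) :=
  rfl

theorem toLinearMap₂_self (f : MultilinearMap R M G) (v : ∀ i, M i) {i j : ι} (hij : i ≠ j) :
    f.toLinearMap₂ v hij (v i) (v j) = f v := by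
  simp

theorem toLinearMap₂_comm {N : Type*} [AddCommMonoid N] [Module R N]
    (f : MultilinearMap R (fun _ : ι => N) G)
    (hf : ∀ (σ : Equiv.Perm ι) (x : ι → N), f (x ∘ σ) = f x)
    (v : ι → N) {i j : ι} (hij : i ≠ j) (p q : N) :
    f.toLinearMap₂ v hij p q = f.toLinearMap₂ v hij q p := by
  rw [toLinearMap₂_apply, ← hf (Equiv.swap i j), Equiv.comp_swap_eq_update]
  simp [update_of_ne hij, update_comm hij]

end MultilinearMap

variable {𝕜 G ι : Type*} [RCLike 𝕜] [NormedAddCommGroup G] [NormedSpace 𝕜 G] [Fintype ι]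

namespace LinearMap

variable {E : Type*} [NormedAddCommGroup E] [NormedSpace 𝕜 E]

theorem norm_apply_smul_self (B : E →ₗ[𝕜] E →ₗ[𝕜] G) (c : 𝕜) (p : E) :
    ‖B (c • p) (c • p)‖ = ‖c‖ ^ 2 * ‖B p p‖ := by
  simp [norm_smul, pow_two, mul_assoc]

theorem norm_apply_self_le_mul_sq (B : E →ₗ[𝕜] E →ₗ[𝕜] G) {m : ℝ}
    (hm : ∀ p, ‖p‖ ≤ 1 → ‖B p p‖ ≤ m) (p : E) : ‖B p p‖ ≤ m * ‖p‖ ^ 2 := by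
  rcases eq_or_ne p 0 with rfl | hp
  · simp
  have hp' : ((‖p‖ : ℝ) : 𝕜) ≠ 0 := by exact_mod_cast norm_ne_zero_iff.2 hp
  have hscale := norm_apply_smul_self B (‖p‖ : 𝕜) ((‖p‖⁻¹ : 𝕜) • p)
  rw [smul_inv_smul₀ hp', RCLike.norm_ofReal, abs_norm] at hscale
  rw [hscale, mul_comm m]
  exact mul_le_mul_of_nonneg_left (hm _ (norm_smul_inv_norm hp).le) (by positivity)

end LinearMap

theorem ContinuousMultilinearMap.opNorm_le_of_forall_norm_le_one_s1 {E : ι → Type*}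
    [∀ i, NormedAddCommGroup (E i)] [∀ i, NormedSpace 𝕜 (E i)]
    (f : ContinuousMultilinearMap 𝕜 E G) {C : ℝ} (hC₀ : 0 ≤ C)
    (hC : ∀ m, ‖m‖ ≤ 1 → ‖f m‖ ≤ C) : ‖f‖ ≤ C := by
  refine f.opNorm_le_bound hC₀ fun m => ?_
  by_cases! hm : ∃ i, m i = 0
  · obtain ⟨i, hi⟩ := hm
    rw [f.map_coord_zero i hi, norm_zero]
    positivity
  have hle := hC (fun i => (‖m i‖⁻¹ : 𝕜) • m i)
    ((pi_norm_le_iff_of_nonneg zero_le_one).2 fun i => (norm_smul_inv_norm (hm i)).le)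
  rw [f.map_smul_univ, norm_smul, norm_prod] at hle
  simp only [norm_inv, RCLike.norm_ofReal, abs_norm, Finset.prod_inv_distrib] at hle
  rwa [inv_mul_le_iff₀ (Finset.prod_pos fun i _ => norm_pos_iff.2 (hm i)), mul_comm] at hle

theorem MultilinearMap.norm_eq_one_of_isMaxOn {E : ι → Type*} [∀ i, NormedAddCommGroup (E i)]
    [∀ i, NormedSpace 𝕜 (E i)] (f : MultilinearMap 𝕜 E G) {v : ∀ i, E i}
    (hv₁ : v ∈ closedBall 0 1) (hv : IsMaxOn (‖f ·‖) (closedBall 0 1) v) (hv₀ : f v ≠ 0)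
    (k : ι) : ‖v k‖ = 1 := by
  classical
  have hk₀ : v k ≠ 0 := fun h => hv₀ (f.map_coord_zero k h)
  have hle : ‖f (update v k ((‖v k‖⁻¹ : 𝕜) • v k))‖ ≤ ‖f v‖ :=
    hv (update_mem_closedBall_zero hv₁ (norm_smul_inv_norm hk₀).le)
  rw [f.map_update_smul, update_eq_self, norm_smul, norm_inv, RCLike.norm_ofReal, abs_norm] at hle
  have hinv : ‖v k‖⁻¹ ≤ 1 := le_of_mul_le_mul_right (by rwa [one_mul]) (norm_pos_iff.2 hv₀)
  refine le_antisymm ?_ ((inv_le_one₀ (norm_pos_iff.2 hk₀)).1 hinv)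
  exact (norm_le_pi_norm v k).trans (mem_closedBall_zero_iff.1 hv₁)

variable {E : Type*} [NormedAddCommGroup E] [InnerProductSpace 𝕜 E]

theorem exists_norm_smul_add_lt {e : E} (he : ‖e‖ = 1) (w : E) {t : ℝ} (ht₀ : 0 ≤ t)
    (ht : t < 2) : ∃ e' ∈ ({e, -e} : Set E), ‖(t : 𝕜) • e + w‖ < ‖e' + e' + w‖ := by
  have hsq : ∀ e' : E, ‖e'‖ = 1 →
      ‖e' + e' + w‖ ^ 2 = 4 + 4 * RCLike.re (inner 𝕜 e' w) + ‖w‖ ^ 2 := by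
    intro e' he'
    rw [norm_add_sq (𝕜 := 𝕜), ← two_smul 𝕜 e', norm_smul, inner_smul_left]
    simp [he']
    ring
  have hlhs : ‖(t : 𝕜) • e + w‖ ^ 2 = t ^ 2 + 2 * t * RCLike.re (inner 𝕜 e w) + ‖w‖ ^ 2 := by
    rw [norm_add_sq (𝕜 := 𝕜), norm_smul, inner_smul_left]
    simp [he, abs_of_nonneg ht₀]
    ring
  rcases le_total 0 (RCLike.re (inner 𝕜 e w)) with hr | hr
  · refine ⟨e, by simp, lt_of_pow_lt_pow_left₀ 2 (norm_nonneg _) ?_⟩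
    rw [hsq e he, hlhs]
    nlinarith
  · refine ⟨-e, by simp, lt_of_pow_lt_pow_left₀ 2 (norm_nonneg _) ?_⟩
    rw [hsq (-e) (by rw [norm_neg, he]), hlhs, inner_neg_left, map_neg]
    nlinarith

theorem LinearMap.exists_le_norm_apply_self_of_le_norm_apply (B : E →ₗ[𝕜] E →ₗ[𝕜] G)
    (hB : ∀ p q, B p q = B q p) {m : ℝ} (hm : ∀ p, ‖p‖ ≤ 1 → ‖B p p‖ ≤ m) {x y : E}
    (hx : ‖x‖ = 1) (hy : ‖y‖ = 1) (hxy : m ≤ ‖B x y‖) :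
    ∃ e, ‖e‖ = 1 ∧ m ≤ ‖B e e‖ ∧ x + y = (‖x + y‖ : 𝕜) • e := by
  rcases eq_or_ne (x + y) 0 with hs | hs
  · refine ⟨x, hx, ?_, by simp [hs]⟩
    rwa [eq_neg_of_add_eq_zero_right hs, map_neg, norm_neg] at hxy
  set e := (‖x + y‖⁻¹ : 𝕜) • (x + y)
  have hse : x + y = (‖x + y‖ : 𝕜) • e :=
    (smul_inv_smul₀ (by exact_mod_cast norm_ne_zero_iff.2 hs) _).symm
  refine ⟨e, norm_smul_inv_norm hs, ?_, hse⟩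
  have hpolar : (4 : 𝕜) • B x y = B (x + y) (x + y) - B (x - y) (x - y) := by
    simp only [map_add, map_sub, add_apply, sub_apply, hB y x]
    module
  have hpar : ‖x + y‖ ^ 2 + ‖x - y‖ ^ 2 = 4 := by
    rw [parallelogram_law_with_norm 𝕜, hx, hy]
    norm_num
  have hbound : 4 * m ≤ ‖x + y‖ ^ 2 * ‖B e e‖ + m * ‖x - y‖ ^ 2 :=
    calc 4 * m ≤ ‖(4 : 𝕜) • B x y‖ := by rw [norm_smul, RCLike.norm_ofNat]; gcongr
      _ ≤ ‖B (x + y) (x + y)‖ + ‖B (x - y) (x - y)‖ := hpolar ▸ norm_sub_le _ _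
      _ ≤ ‖x + y‖ ^ 2 * ‖B e e‖ + m * ‖x - y‖ ^ 2 := by
        rw [hse, norm_apply_smul_self, RCLike.norm_ofReal, abs_norm, ← hse]
        gcongr
        exact norm_apply_self_le_mul_sq B hm _
  rw [show ‖x - y‖ ^ 2 = 4 - ‖x + y‖ ^ 2 by linarith] at hbound
  exact le_of_mul_le_mul_left (by linarith) (by positivity : 0 < ‖x + y‖ ^ 2)

theorem MultilinearMap.eq_of_isMaxOn_norm_sum (f : MultilinearMap 𝕜 (fun _ : ι => E) G)
    (hf : ∀ (σ : Equiv.Perm ι) (x : ι → E), f (x ∘ σ) = f x) {v : ι → E}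
    (hv₁ : v ∈ closedBall 0 1) (hv : IsMaxOn (‖f ·‖) (closedBall 0 1) v) (hv₀ : f v ≠ 0)
    (hsum : IsMaxOn (fun w => ‖∑ k, w k‖) (closedBall 0 1 ∩ {w | ‖f w‖ = ‖f v‖}) v)
    (i j : ι) : v i = v j := by
  classical
  by_contra hne
  have hij : i ≠ j := fun h => hne (h ▸ rfl)
  have hunit := f.norm_eq_one_of_isMaxOn hv₁ hv hv₀
  set B := f.toLinearMap₂ v hij
  have hBdiag : ∀ p, ‖p‖ ≤ 1 → ‖B p p‖ ≤ ‖f v‖ := fun p hp =>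
    hv (update_mem_closedBall_zero (update_mem_closedBall_zero hv₁ hp) hp)
  obtain ⟨e, he, hBe, hse⟩ := B.exists_le_norm_apply_self_of_le_norm_apply
    (f.toLinearMap₂_comm hf v hij) hBdiag (hunit i) (hunit j) (by rw [toLinearMap₂_self])
  have hs2 : ‖v i + v j‖ < 2 := by
    have hpar := parallelogram_law_with_norm 𝕜 (v i) (v j)
    have hd : 0 < ‖v i - v j‖ := norm_pos_iff.2 (sub_ne_zero.2 hne)
    rw [hunit i, hunit j] at hpar
    nlinarith [norm_nonneg (v i + v j)]
  set w := ∑ k, v k - v i - v j with hw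
  obtain ⟨e', he', hlt⟩ := exists_norm_smul_add_lt (𝕜 := 𝕜) he w (norm_nonneg _) hs2
  set z := update (update v i e') j e'
  have hz₁ : z ∈ closedBall 0 1 := by
    have he'₁ : ‖e'‖ ≤ 1 := by obtain rfl | rfl := he' <;> simp [he]
    exact update_mem_closedBall_zero (update_mem_closedBall_zero hv₁ he'₁) he'₁
  have hBe' : B e' e' = B e e := by obtain rfl | rfl := he' <;> simp
  have hfz : ‖f z‖ = ‖f v‖ := le_antisymm (hv hz₁) (hBe'.symm ▸ hBe)
  have hle : ‖∑ k, z k‖ ≤ ‖∑ k, v k‖ := hsum ⟨hz₁, hfz⟩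
  have hz : ∑ k, z k = e' + e' + w := by
    simp only [z, hw, Finset.sum_update_eq_sub_add, update_of_ne hij.symm]
    abel
  have hsv : ∑ k, v k = (‖v i + v j‖ : 𝕜) • e + w := by
    rw [← hse, hw]
    abel
  rw [hz, hsv] at hle
  exact hle.not_gt hlt

namespace ContinuousMultilinearMap

theorem exists_isMaxOn_norm_const [ProperSpace E]
    (f : ContinuousMultilinearMap 𝕜 (fun _ : ι => E) G)
    (hf : ∀ (σ : Equiv.Perm ι) (x : ι → E), f (x ∘ σ) = f x) :
    ∃ x : E, ‖x‖ ≤ 1 ∧ IsMaxOn (‖f ·‖) (closedBall 0 1) (fun _ => x) := by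
  obtain ⟨u, hu₁, hu⟩ := (isCompact_closedBall (0 : ι → E) 1).exists_isMaxOn
    (nonempty_closedBall.2 zero_le_one) f.cont.norm.continuousOn
  by_cases hu₀ : f u = 0
  · refine ⟨0, by simp, fun y hy => (show ‖f y‖ ≤ ‖f u‖ from hu hy).trans ?_⟩
    rw [hu₀, norm_zero]
    exact norm_nonneg _
  obtain ⟨v, ⟨hv₁, hvu⟩, hv⟩ := ((isCompact_closedBall _ _).inter_right
    (isClosed_eq f.cont.norm continuous_const)).exists_isMaxOn ⟨u, hu₁, rfl⟩
    (continuous_finsetSum _ fun k _ => continuous_apply k).norm.continuousOn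
  have hvu : ‖f v‖ = ‖f u‖ := hvu
  have hvmax : IsMaxOn (‖f ·‖) (closedBall 0 1) v := fun y hy =>
    (show ‖f y‖ ≤ ‖f u‖ from hu hy).trans hvu.ge
  have hv₀ : f v ≠ 0 := by rwa [← norm_ne_zero_iff, hvu, norm_ne_zero_iff]
  have hconst := f.toMultilinearMap.eq_of_isMaxOn_norm_sum hf hv₁ hvmax hv₀ (hvu ▸ hv)
  rcases isEmpty_or_nonempty ι with hι | ⟨⟨i₀⟩⟩
  · exact ⟨0, by simp, by rwa [Subsingleton.elim (fun _ => (0 : E)) v]⟩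
  · refine ⟨v i₀, (norm_le_pi_norm v i₀).trans (mem_closedBall_zero_iff.1 hv₁), ?_⟩
    rwa [show (fun _ => v i₀) = v from funext fun k => hconst i₀ k]

theorem norm_apply_le_of_forall_norm_apply_const_le
    (f : ContinuousMultilinearMap 𝕜 (fun _ : ι => E) G)
    (hf : ∀ (σ : Equiv.Perm ι) (x : ι → E), f (x ∘ σ) = f x) {C : ℝ}
    (hC : ∀ x : E, ‖x‖ ≤ 1 → ‖f fun _ => x‖ ≤ C) {y : ι → E} (hy : ‖y‖ ≤ 1) : ‖f y‖ ≤ C := by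
  set V := Submodule.span 𝕜 (Set.range y)
  have : FiniteDimensional 𝕜 V := FiniteDimensional.span_of_finite 𝕜 (Set.finite_range y)
  obtain ⟨x, hx, hmax⟩ := (f.compContinuousLinearMap fun _ => V.subtypeL).exists_isMaxOn_norm_const
    fun σ x => hf σ fun i => (x i : E)
  let yV : ι → V := fun i => ⟨y i, Submodule.subset_span ⟨i, rfl⟩⟩
  have hyV : yV ∈ closedBall 0 1 := mem_closedBall_zero_iff.2 <|
    (pi_norm_le_iff_of_nonneg zero_le_one).2 fun i => (norm_le_pi_norm y i).trans hy
  exact (hmax hyV).trans (hC x hx)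

end ContinuousMultilinearMap

end

theorem banach_symmetric_multilinear_norm_general {𝕜 H : Type*} [RCLike 𝕜] [NormedAddCommGroup H]
    [InnerProductSpace 𝕜 H] (n : ℕ)
    (L : ContinuousMultilinearMap 𝕜 (fun _ : Fin n => H) 𝕜)
    (hsymm : ∀ (σ : Equiv.Perm (Fin n)) (x : Fin n → H), L (x ∘ σ) = L x) :
    ‖L‖ = sSup {y : ℝ | ∃ x : H, ‖x‖ ≤ 1 ∧ y = ‖L (fun _ => x)‖} := by
  set S := {y : ℝ | ∃ x : H, ‖x‖ ≤ 1 ∧ y = ‖L (fun _ => x)‖}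
  have hdiag : ∀ x : H, ‖x‖ ≤ 1 → ‖L fun _ => x‖ ≤ ‖L‖ := fun x hx =>
    L.unit_le_opNorm ((pi_norm_const_le x).trans hx)
  have hbdd : BddAbove S := ⟨‖L‖, by rintro _ ⟨x, hx, rfl⟩; exact hdiag x hx⟩
  have hsup : ∀ x : H, ‖x‖ ≤ 1 → ‖L fun _ => x‖ ≤ sSup S := fun x hx =>
    le_csSup hbdd ⟨x, hx, rfl⟩
  refine le_antisymm ?_ (csSup_le ⟨_, 0, by simp, rfl⟩ ?_)
  · exact L.opNorm_le_of_forall_norm_le_one_s1 ((norm_nonneg _).trans (hsup 0 (by simp)))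
      fun y hy => L.norm_apply_le_of_forall_norm_apply_const_le hsymm hsup hy
  · rintro _ ⟨x, hx, rfl⟩
    exact hdiag x hx

/-- Banach's theorem: in a Hilbert space, the norm of a continuous symmetric n-linear
form equals the sup of its diagonal over the unit ball. -/
theorem banach_symmetric_multilinear_norm {𝕜 H : Type*} [RCLike 𝕜] [NormedAddCommGroup H]
    [InnerProductSpace 𝕜 H] [CompleteSpace H] (n : ℕ)
    (L : ContinuousMultilinearMap 𝕜 (fun _ : Fin n => H) 𝕜)
    (hsymm : ∀ (σ : Equiv.Perm (Fin n)) (x : Fin n → H), L (x ∘ σ) = L x) :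
    ‖L‖ = sSup {y : ℝ | ∃ x : H, ‖x‖ ≤ 1 ∧ y = ‖L (fun _ => x)‖} :=
  banach_symmetric_multilinear_norm_general n L hsymm
end

section
/- The sequence c_n(X) of polarization constants is supermultiplicative: c_{m+n}(X) ≥ c_m(X) · c_n(X) holds for all m, n; consequently the limit lim_{n→∞} c_n(X)^{1/n} exists in [1,∞] (and equals sup_n c_n(X)^{1/n}). -/
open scoped BigOperators ENNReal

/-- `sup_{‖x‖≤1} |∏ⱼ fⱼ(x)|` for functionals `f₁,…,fₙ`. -/
noncomputable def supNormProd {𝕜 X : Type*} [RCLike 𝕜] [NormedAddCommGroup X]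
    [NormedSpace 𝕜 X] {n : ℕ} (f : Fin n → (X →L[𝕜] 𝕜)) : ℝ :=
  sSup {t : ℝ | ∃ x : X, ‖x‖ ≤ 1 ∧ t = ‖∏ j, f j x‖}

/-- The n-th linear polarization constant
`cₙ(X) = 1 / inf_{f₁,…,fₙ ∈ S_{X*}} sup_{‖x‖≤1} |∏ⱼ fⱼ(x)|`. -/
noncomputable def polarizationConst (𝕜 X : Type*) [RCLike 𝕜] [NormedAddCommGroup X]
    [NormedSpace 𝕜 X] (n : ℕ) : ℝ :=
  (sInf {y : ℝ | ∃ f : Fin n → (X →L[𝕜] 𝕜), (∀ j, ‖f j‖ = 1) ∧ y = supNormProd f})⁻¹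

/-! Concatenating unit functionals `f₁,…,fₘ` and `g₁,…,gₙ` gives a tuple whose sup-norm product
is at most `(sup |∏ fᵢ|)(sup |∏ gⱼ|)`, so the infima `Iₖ = 1 / cₖ` satisfy `I_{m+n} ≤ Iₘ Iₙ`.
Inverting this needs `Iₖ > 0`: by induction on the number of functionals there is a point of the
unit ball at which each of `k` unit functionals has modulus at least `8⁻ᵏ`, so `Iₖ ≥ 8^(-k²)`.
Finally `-log cₙ` is subadditive, and the half of Fekete's argument that needs no lower bound shows
`cₙ^(1/n)` tends to its supremum in `[1, ∞]`. -/

open Filter Topology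

lemma norm_le_norm_add_or_norm_le_norm_sub {E : Type*} [SeminormedAddCommGroup E]
    [NormedSpace ℝ E] (a b : E) : ‖b‖ ≤ ‖a + b‖ ∨ ‖b‖ ≤ ‖a - b‖ := by
  by_contra! h
  have : ‖(2 : ℝ) • b‖ ≤ ‖a + b‖ + ‖a - b‖ := by
    rw [show (2 : ℝ) • b = (a + b) - (a - b) by module]
    exact norm_sub_le _ _
  rw [norm_smul, Real.norm_two] at this
  linarith [h.1, h.2]

section SupNormProd

variable {𝕜 X : Type*} [RCLike 𝕜] [NormedAddCommGroup X] [NormedSpace 𝕜 X]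

lemma norm_prod_apply_le_one {n : ℕ} {f : Fin n → X →L[𝕜] 𝕜} (hf : ∀ j, ‖f j‖ ≤ 1)
    {x : X} (hx : ‖x‖ ≤ 1) : ‖∏ j, f j x‖ ≤ 1 := by
  rw [norm_prod]
  exact Finset.prod_le_one (fun _ _ => norm_nonneg _)
    fun j _ => by simpa using (f j).le_of_opNorm_le_of_le (hf j) hx

lemma norm_prod_apply_le_supNormProd {n : ℕ} {f : Fin n → X →L[𝕜] 𝕜} (hf : ∀ j, ‖f j‖ ≤ 1)
    {x : X} (hx : ‖x‖ ≤ 1) : ‖∏ j, f j x‖ ≤ supNormProd f :=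
  le_csSup ⟨1, by rintro _ ⟨y, hy, rfl⟩; exact norm_prod_apply_le_one hf hy⟩ ⟨x, hx, rfl⟩

lemma supNormProd_nonneg {n : ℕ} {f : Fin n → X →L[𝕜] 𝕜} (hf : ∀ j, ‖f j‖ ≤ 1) :
    0 ≤ supNormProd f :=
  (norm_nonneg _).trans (norm_prod_apply_le_supNormProd hf (x := 0) (by simp))

lemma supNormProd_le_of_forall_le {n : ℕ} {f : Fin n → X →L[𝕜] 𝕜} {r : ℝ}
    (h : ∀ x : X, ‖x‖ ≤ 1 → ‖∏ j, f j x‖ ≤ r) : supNormProd f ≤ r :=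
  csSup_le ⟨_, 0, by simp, rfl⟩ (by rintro _ ⟨x, hx, rfl⟩; exact h x hx)

lemma supNormProd_le_one {n : ℕ} {f : Fin n → X →L[𝕜] 𝕜} (hf : ∀ j, ‖f j‖ ≤ 1) :
    supNormProd f ≤ 1 :=
  supNormProd_le_of_forall_le fun _ => norm_prod_apply_le_one hf

lemma supNormProd_append_le {m n : ℕ} {f : Fin m → X →L[𝕜] 𝕜} {g : Fin n → X →L[𝕜] 𝕜}
    (hf : ∀ j, ‖f j‖ ≤ 1) (hg : ∀ j, ‖g j‖ ≤ 1) :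
    supNormProd (Fin.append f g) ≤ supNormProd f * supNormProd g := by
  refine supNormProd_le_of_forall_le fun x hx => ?_
  rw [Fin.prod_univ_add]
  simp only [Fin.append_left, Fin.append_right, norm_mul]
  exact mul_le_mul (norm_prod_apply_le_supNormProd hf hx) (norm_prod_apply_le_supNormProd hg hx)
    (norm_nonneg _) (supNormProd_nonneg hf)

/-- Halve `x` and move it by `±(δ/4) y`, choosing the sign so that `g` does not become small. -/
lemma exists_near_half_le_norm_apply {x y : X} (hx : ‖x‖ ≤ 1) (hy : ‖y‖ ≤ 1) {δ : ℝ}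
    (hδ₀ : 0 ≤ δ) (hδ₁ : δ ≤ 1) (g : X →L[𝕜] 𝕜) :
    ∃ w : X, ‖w‖ ≤ 1 ∧ δ / 4 * ‖g y‖ ≤ ‖g w‖ ∧
      ∀ h : X →L[𝕜] 𝕜, ‖h‖ ≤ 1 → ‖h x‖ / 2 - δ / 4 ≤ ‖h w‖ := by
  set b : X := ((δ / 4 : ℝ) : 𝕜) • y
  have hb : ‖b‖ ≤ δ / 4 := by
    rw [norm_smul, RCLike.norm_ofReal, abs_of_nonneg (by positivity)]
    nlinarith
  have hgb : ‖g b‖ = δ / 4 * ‖g y‖ := by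
    rw [map_smul, norm_smul, RCLike.norm_ofReal, abs_of_nonneg (by positivity)]
  obtain ⟨v, hv, hgv⟩ : ∃ v : X, ‖v‖ ≤ δ / 4 ∧ δ / 4 * ‖g y‖ ≤ ‖g ((2⁻¹ : 𝕜) • x + v)‖ := by
    rcases norm_le_norm_add_or_norm_le_norm_sub (g ((2⁻¹ : 𝕜) • x)) (g b) with h | h
    · exact ⟨b, hb, by rwa [map_add, ← hgb]⟩
    · exact ⟨-b, by rwa [norm_neg], by rwa [map_add, map_neg, ← sub_eq_add_neg, ← hgb]⟩
  have hhalf : ∀ z : X, ‖(2⁻¹ : 𝕜) • z‖ = ‖z‖ / 2 := fun z => by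
    rw [norm_smul, norm_inv, RCLike.norm_two, inv_mul_eq_div]
  refine ⟨(2⁻¹ : 𝕜) • x + v, ?_, hgv, fun h hh => ?_⟩
  · linarith [norm_add_le ((2⁻¹ : 𝕜) • x) v, hhalf x]
  · have hhv : ‖h v‖ ≤ δ / 4 := by simpa using h.le_of_opNorm_le_of_le hh hv
    rw [map_add, map_smul]
    have := norm_sub_le ((2⁻¹ : 𝕜) • h x + h v) (h v)
    rw [add_sub_cancel_right, norm_smul, norm_inv, RCLike.norm_two] at this
    linarith

theorem exists_norm_le_one_forall_le_norm_apply {ι : Type*} (f : ι → X →L[𝕜] 𝕜)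
    (hf : ∀ i, ‖f i‖ = 1) (s : Finset ι) :
    ∃ x : X, ‖x‖ ≤ 1 ∧ ∀ i ∈ s, (8⁻¹ : ℝ) ^ s.card ≤ ‖f i x‖ := by
  classical
  induction s using Finset.induction_on with
  | empty => exact ⟨0, by simp, by simp⟩
  | insert a s ha ih =>
    obtain ⟨x, hx, hxs⟩ := ih
    obtain ⟨y, hy, hay⟩ := (f a).exists_lt_apply_of_lt_opNorm (r := 1 / 2) (by norm_num [hf a])
    set δ : ℝ := 8⁻¹ ^ s.card
    have hδ₀ : 0 ≤ δ := by positivity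
    obtain ⟨w, hw, hwa, hws⟩ :=
      exists_near_half_le_norm_apply hx hy.le hδ₀ (pow_le_one₀ (by norm_num) (by norm_num))
        (f a)
    refine ⟨w, hw, fun i hi => ?_⟩
    rw [Finset.card_insert_of_notMem ha, pow_succ]
    change δ * 8⁻¹ ≤ _
    rcases Finset.mem_insert.1 hi with rfl | hi
    · nlinarith
    · linarith [hws (f i) (hf i).le, hxs i hi]

lemma pow_le_supNormProd {n : ℕ} {f : Fin n → X →L[𝕜] 𝕜} (hf : ∀ j, ‖f j‖ = 1) :
    (8⁻¹ : ℝ) ^ (n * n) ≤ supNormProd f := by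
  obtain ⟨x, hx, hfx⟩ := exists_norm_le_one_forall_le_norm_apply f hf Finset.univ
  calc (8⁻¹ : ℝ) ^ (n * n) = ∏ _j : Fin n, (8⁻¹ : ℝ) ^ n := by simp [pow_mul']
    _ ≤ ∏ j, ‖f j x‖ :=
      Finset.prod_le_prod (fun _ _ => by positivity) fun j hj => by simpa using hfx j hj
    _ = ‖∏ j, f j x‖ := (norm_prod _ _).symm
    _ ≤ supNormProd f := norm_prod_apply_le_supNormProd (fun j => (hf j).le) hx

lemma supNormProd_pos {n : ℕ} {f : Fin n → X →L[𝕜] 𝕜} (hf : ∀ j, ‖f j‖ = 1) :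
    0 < supNormProd f :=
  (pow_pos (by norm_num) _).trans_le (pow_le_supNormProd hf)

end SupNormProd

noncomputable def polarizationInf (𝕜 X : Type*) [RCLike 𝕜] [NormedAddCommGroup X]
    [NormedSpace 𝕜 X] (n : ℕ) : ℝ :=
  sInf {y : ℝ | ∃ f : Fin n → (X →L[𝕜] 𝕜), (∀ j, ‖f j‖ = 1) ∧ y = supNormProd f}

section PolarizationInf

variable {𝕜 X : Type*} [RCLike 𝕜] [NormedAddCommGroup X] [NormedSpace 𝕜 X]

lemma polarizationConst_eq_inv (n : ℕ) :
    polarizationConst 𝕜 X n = (polarizationInf 𝕜 X n)⁻¹ :=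
  rfl

lemma polarizationInf_le_supNormProd {n : ℕ} {f : Fin n → X →L[𝕜] 𝕜} (hf : ∀ j, ‖f j‖ = 1) :
    polarizationInf 𝕜 X n ≤ supNormProd f :=
  csInf_le ⟨0, by rintro _ ⟨g, hg, rfl⟩; exact supNormProd_nonneg fun j => (hg j).le⟩ ⟨f, hf, rfl⟩

variable [Nontrivial X]

lemma exists_dual_norm_eq_one : ∃ g : X →L[𝕜] 𝕜, ‖g‖ = 1 := by
  obtain ⟨x, hx⟩ := exists_ne (0 : X)
  obtain ⟨g, hg, -⟩ := exists_dual_vector 𝕜 x (norm_ne_zero_iff.2 hx)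
  exact ⟨g, hg⟩

lemma le_polarizationInf {n : ℕ} {r : ℝ}
    (h : ∀ f : Fin n → X →L[𝕜] 𝕜, (∀ j, ‖f j‖ = 1) → r ≤ supNormProd f) :
    r ≤ polarizationInf 𝕜 X n := by
  obtain ⟨g, hg⟩ := exists_dual_norm_eq_one (𝕜 := 𝕜) (X := X)
  exact le_csInf ⟨_, fun _ => g, fun _ => hg, rfl⟩ (by rintro _ ⟨f, hf, rfl⟩; exact h f hf)

lemma polarizationInf_pos (n : ℕ) : 0 < polarizationInf 𝕜 X n :=
  (pow_pos (by norm_num) (n * n)).trans_le (le_polarizationInf fun _ => pow_le_supNormProd)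

lemma polarizationInf_le_one (n : ℕ) : polarizationInf 𝕜 X n ≤ 1 := by
  obtain ⟨g, hg⟩ := exists_dual_norm_eq_one (𝕜 := 𝕜) (X := X)
  exact (polarizationInf_le_supNormProd (f := fun _ : Fin n => g) fun _ => hg).trans
    (supNormProd_le_one fun _ => hg.le)

lemma polarizationInf_add_le_mul (m n : ℕ) :
    polarizationInf 𝕜 X (m + n) ≤ polarizationInf 𝕜 X m * polarizationInf 𝕜 X n := by
  have hm := polarizationInf_pos (𝕜 := 𝕜) (X := X) m
  rw [← div_le_iff₀' hm]
  refine le_polarizationInf fun g hg => ?_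
  have hg₀ := supNormProd_pos hg
  rw [div_le_iff₀' hm, ← div_le_iff₀ hg₀]
  refine le_polarizationInf fun f hf => ?_
  rw [div_le_iff₀ hg₀]
  have hfg : ∀ j, ‖Fin.append f g j‖ = 1 := fun j => by
    refine Fin.addCases (fun i => ?_) (fun i => ?_) j <;> simp [hf, hg]
  exact (polarizationInf_le_supNormProd hfg).trans
    (supNormProd_append_le (fun j => (hf j).le) fun j => (hg j).le)

lemma one_le_polarizationConst (n : ℕ) : 1 ≤ polarizationConst 𝕜 X n :=
  (one_le_inv₀ (polarizationInf_pos n)).2 (polarizationInf_le_one n)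

lemma polarizationConst_mul_le (m n : ℕ) :
    polarizationConst 𝕜 X m * polarizationConst 𝕜 X n ≤ polarizationConst 𝕜 X (m + n) := by
  simp only [polarizationConst_eq_inv, ← mul_inv]
  exact inv_anti₀ (polarizationInf_pos _) (polarizationInf_add_le_mul m n)

end PolarizationInf

lemma eventually_lt_rpow_of_mul_le {c : ℕ → ℝ} (hc : ∀ n, 0 < c n)
    (hmul : ∀ m n, c m * c n ≤ c (m + n)) {k : ℕ} (hk : k ≠ 0) {r : ℝ}
    (hr : r < c k ^ (k : ℝ)⁻¹) : ∀ᶠ p : ℕ in atTop, r < c p ^ (p : ℝ)⁻¹ := by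
  rcases le_or_gt r 0 with hr₀ | hr₀
  · exact Eventually.of_forall fun p => hr₀.trans_lt (Real.rpow_pos_of_pos (hc p) _)
  have hsub : Subadditive fun n => -Real.log (c n) := fun m n => by
    rw [← neg_add, neg_le_neg_iff, ← Real.log_mul (hc m).ne' (hc n).ne']
    exact Real.log_le_log (mul_pos (hc m) (hc n)) (hmul m n)
  have hlog : ∀ p : ℕ, r < c p ^ (p : ℝ)⁻¹ ↔ -Real.log (c p) / p < -Real.log r := fun p => by
    rw [Real.lt_rpow_iff_log_lt hr₀ (hc p), neg_div, neg_lt_neg_iff, div_eq_inv_mul]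
  exact (hsub.eventually_div_lt_of_div_lt hk ((hlog k).1 hr)).mono fun p hp => (hlog p).2 hp

theorem tendsto_ofReal_rpow_iSup_of_mul_le {c : ℕ → ℝ} (hc : ∀ n, 0 < c n)
    (hmul : ∀ m n, c m * c n ≤ c (m + n)) :
    Tendsto (fun n : ℕ => ENNReal.ofReal (c (n + 1) ^ (1 / ((n : ℝ) + 1)))) atTop
      (𝓝 (⨆ n : ℕ, ENNReal.ofReal (c (n + 1) ^ (1 / ((n : ℝ) + 1))))) := by
  have hpow : ∀ n : ℕ, c (n + 1) ^ (1 / ((n : ℝ) + 1)) = c (n + 1) ^ ((n + 1 : ℕ) : ℝ)⁻¹ :=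
    fun n => by push_cast; rw [one_div]
  refine tendsto_order.2 ⟨fun a ha => ?_, fun a ha => .of_forall fun n => (le_iSup _ n).trans_lt ha⟩
  obtain ⟨k, hk⟩ := lt_iSup_iff.1 ha
  have ha_top : a ≠ ⊤ := ne_top_of_lt hk
  rw [ENNReal.lt_ofReal_iff_toReal_lt ha_top, hpow] at hk
  have := eventually_lt_rpow_of_mul_le hc hmul k.succ_ne_zero hk
  refine ((tendsto_add_atTop_nat 1).eventually this).mono fun n hn => ?_
  rw [ENNReal.lt_ofReal_iff_toReal_lt ha_top, hpow]
  exact hn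

/-- Supermultiplicativity `c_{m+n}(X) ≥ c_m(X)·c_n(X)`, and consequently
`lim_{n→∞} cₙ(X)^{1/n}` exists in `[1,∞]` and equals `sup_n cₙ(X)^{1/n}`. -/
theorem polarizationConst_supermultiplicative_and_limit (𝕜 X : Type*) [RCLike 𝕜]
    [NormedAddCommGroup X] [NormedSpace 𝕜 X] [Nontrivial X] :
    (∀ m n : ℕ, polarizationConst 𝕜 X m * polarizationConst 𝕜 X n ≤
        polarizationConst 𝕜 X (m + n)) ∧
      (⨆ n : ℕ, ENNReal.ofReal (polarizationConst 𝕜 X (n + 1) ^ (1 / ((n : ℝ) + 1)))) ∈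
        Set.Ici (1 : ℝ≥0∞) ∧
      Filter.Tendsto
        (fun n : ℕ => ENNReal.ofReal (polarizationConst 𝕜 X (n + 1) ^ (1 / ((n : ℝ) + 1))))
        Filter.atTop
        (nhds (⨆ n : ℕ, ENNReal.ofReal (polarizationConst 𝕜 X (n + 1) ^ (1 / ((n : ℝ) + 1))))) := by
  have hpos : ∀ n, 0 < polarizationConst 𝕜 X n := fun n =>
    one_pos.trans_le (one_le_polarizationConst n)
  refine ⟨polarizationConst_mul_le, ?_, tendsto_ofReal_rpow_iSup_of_mul_le hpos
    polarizationConst_mul_le⟩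
  rw [Set.mem_Ici]
  refine le_iSup_of_le 0 ?_
  rw [ENNReal.one_le_ofReal]
  exact Real.one_le_rpow (one_le_polarizationConst 1) (by norm_num)
end

section
/- For the 2-dimensional real Euclidean space, c_n(ℝ²) = 2^{n-1} for every n ≥ 1; equivalently, the n-th metric Chebyshev constant of the unit circle S¹ satisfies M_n(S¹) = 2, i.e., for any points y₁,...,yₙ ∈ S¹ there exists y ∈ S¹ with ∏_{j=1}^n ‖y − y_j‖ ≥ 2, and 2 is optimal. -/
open scoped BigOperators

/-!
A norm-one functional on `ℂ ≅ ℝ²` is `x ↦ ⟪u, x⟫` with `‖u‖ = 1`, and on the unit circle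
`2 |⟪u, x⟫| = ‖x² + u²‖`. As squaring maps the circle onto itself, the supremum of
`|∏ ⟪uⱼ, x⟫|` over the unit ball is `2⁻ⁿ sup_{‖w‖=1} ∏ ‖w + uⱼ²‖`, so `cₙ(ℝ²) = 2ⁿ / Mₙ(S¹)`.

For `Mₙ(S¹) = 2`: averaging the monic `P = ∏ (X - yⱼ)` over the points `α ζᵐ`, with `ζ` a
primitive `n`-th root of unity and `αⁿ = P(0)`, leaves only `n (P(0) + αⁿ) = 2 n P(0)`, so
`‖P(α ζᵐ)‖ ≥ 2` for some `m`. Conversely the `n`-th roots of unity give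
`∏ ‖w - ζʲ‖ = ‖wⁿ - 1‖ ≤ 2`, with equality where `wⁿ = -1`.
-/

open Finset Polynomial
open scoped Pointwise InnerProductSpace

section Polarization

variable {𝕜 X Y : Type*} [RCLike 𝕜] [NormedAddCommGroup X] [NormedSpace 𝕜 X]
  [NormedAddCommGroup Y] [NormedSpace 𝕜 Y] {n : ℕ}

theorem exists_eq_smul_of_norm_le_one [Nontrivial X] {x : X} (hx : ‖x‖ ≤ 1) :
    ∃ (c : 𝕜) (v : X), ‖c‖ ≤ 1 ∧ ‖v‖ = 1 ∧ x = c • v := by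
  rcases eq_or_ne x 0 with rfl | hx0
  · obtain ⟨v, hv⟩ := exists_ne (0 : X)
    exact ⟨0, _, by simp, norm_smul_inv_norm (𝕜 := 𝕜) hv, by simp⟩
  · refine ⟨(‖x‖ : 𝕜), _, by simpa using hx, norm_smul_inv_norm (𝕜 := 𝕜) hx0, ?_⟩
    rw [smul_smul, mul_inv_cancel₀ (RCLike.ofReal_ne_zero.2 (norm_ne_zero_iff.2 hx0)), one_smul]

theorem prod_apply_smul (f : Fin n → X →L[𝕜] 𝕜) (c : 𝕜) (v : X) :
    ∏ j, f j (c • v) = c ^ n * ∏ j, f j v := by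
  simp [prod_mul_distrib]

theorem supNormProd_eq_sSup_sphere [Nontrivial X] (f : Fin n → X →L[𝕜] 𝕜) :
    supNormProd f = sSup {t : ℝ | ∃ x : X, ‖x‖ = 1 ∧ t = ‖∏ j, f j x‖} := by
  refine csSup_eq_csSup_of_forall_exists_le ?_ fun t ⟨x, hx, ht⟩ => ⟨t, ⟨x, hx.le, ht⟩, le_rfl⟩
  rintro _ ⟨x, hx, rfl⟩
  obtain ⟨c, v, hc, hv, rfl⟩ := exists_eq_smul_of_norm_le_one (𝕜 := 𝕜) hx
  refine ⟨_, ⟨v, hv, rfl⟩, ?_⟩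
  rw [prod_apply_smul, norm_mul, norm_pow]
  exact mul_le_of_le_one_left (norm_nonneg _) (pow_le_one₀ (norm_nonneg c) hc)

theorem supNormProd_comp_linearIsometryEquiv (f : Fin n → Y →L[𝕜] 𝕜) (e : X ≃ₗᵢ[𝕜] Y) :
    supNormProd (fun j => (f j).comp (e : X →L[𝕜] Y)) = supNormProd f := by
  unfold supNormProd
  congr 1
  ext t
  constructor
  · rintro ⟨x, hx, rfl⟩
    exact ⟨e x, by simpa using hx, rfl⟩
  · rintro ⟨y, hy, rfl⟩
    exact ⟨e.symm y, by simpa using hy, by simp⟩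

theorem polarizationConst_congr (e : X ≃ₗᵢ[𝕜] Y) :
    polarizationConst 𝕜 X n = polarizationConst 𝕜 Y n := by
  unfold polarizationConst
  congr 2
  ext t
  constructor
  · rintro ⟨f, hf, rfl⟩
    exact ⟨_, fun j => (ContinuousLinearMap.opNorm_comp_linearIsometryEquiv (f j) e.symm).trans
      (hf j), (supNormProd_comp_linearIsometryEquiv f e.symm).symm⟩
  · rintro ⟨f, hf, rfl⟩
    exact ⟨_, fun j => (ContinuousLinearMap.opNorm_comp_linearIsometryEquiv (f j) e).trans
      (hf j), (supNormProd_comp_linearIsometryEquiv f e).symm⟩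

end Polarization

/-- `Mₙ(S)` for the unit sphere `S` of `E`. -/
noncomputable def sphereChebyshevConst (E : Type*) [SeminormedAddCommGroup E] (n : ℕ) : ℝ :=
  sInf {s : ℝ | ∃ y : Fin n → E, (∀ j, ‖y j‖ = 1) ∧
    s = sSup {t : ℝ | ∃ x : E, ‖x‖ = 1 ∧ t = ∏ j, ‖x - y j‖}}

section Chebyshev

variable {E F : Type*} [SeminormedAddCommGroup E] [SeminormedAddCommGroup F] {n : ℕ}

theorem bddAbove_prod_norm_sub {y : Fin n → E} (hy : ∀ j, ‖y j‖ = 1) :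
    BddAbove {t : ℝ | ∃ x : E, ‖x‖ = 1 ∧ t = ∏ j, ‖x - y j‖} := by
  refine ⟨2 ^ n, ?_⟩
  rintro _ ⟨x, hx, rfl⟩
  calc ∏ j, ‖x - y j‖ ≤ ∏ _j : Fin n, (2 : ℝ) :=
        prod_le_prod (fun j _ => norm_nonneg _) fun j _ =>
          (norm_sub_le _ _).trans (by rw [hx, hy]; norm_num)
    _ = 2 ^ n := by simp

theorem sphereChebyshevConst_congr {R : Type*} [Semiring R] [Module R E] [Module R F]
    (e : E ≃ₗᵢ[R] F) : sphereChebyshevConst E n = sphereChebyshevConst F n := by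
  have hsup (y : Fin n → E) :
      {t : ℝ | ∃ x : F, ‖x‖ = 1 ∧ t = ∏ j, ‖x - e (y j)‖} =
        {t : ℝ | ∃ x : E, ‖x‖ = 1 ∧ t = ∏ j, ‖x - y j‖} := by
    ext t
    constructor
    · rintro ⟨x, hx, rfl⟩
      exact ⟨e.symm x, by simpa using hx, by simp [← e.symm.norm_map]⟩
    · rintro ⟨x, hx, rfl⟩
      exact ⟨e x, by simpa using hx, by simp [← map_sub]⟩
  unfold sphereChebyshevConst
  congr 1
  ext s
  constructor
  · rintro ⟨y, hy, rfl⟩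
    exact ⟨fun j => e (y j), by simpa using hy, by rw [hsup]⟩
  · rintro ⟨y, hy, rfl⟩
    refine ⟨fun j => e.symm (y j), by simpa using hy, ?_⟩
    simpa using congrArg sSup (hsup fun j => e.symm (y j))

end Chebyshev

namespace IsPrimitiveRoot

variable {R : Type*} [CommRing R] [IsDomain R] {n : ℕ} {ζ : R}

theorem sum_range_pow_pow (hζ : IsPrimitiveRoot ζ n) (k : ℕ) :
    ∑ m ∈ range n, (ζ ^ k) ^ m = if n ∣ k then (n : R) else 0 := by
  split_ifs with hk
  · simp [(hζ.pow_eq_one_iff_dvd k).2 hk]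
  · have hgeom := geom_sum_mul (ζ ^ k) n
    rw [← pow_mul, mul_comm k n, pow_mul, hζ.pow_eq_one, one_pow, sub_self] at hgeom
    refine (mul_eq_zero.1 hgeom).resolve_right (sub_ne_zero.2 fun h => hk ?_)
    exact (hζ.pow_eq_one_iff_dvd k).1 h

theorem sum_range_eval_mul_pow (hζ : IsPrimitiveRoot ζ n) {P : R[X]} (hP : P.natDegree ≤ n)
    (α : R) : ∑ m ∈ range n, P.eval (α * ζ ^ m) = n * (P.coeff 0 + P.coeff n * α ^ n) := by
  rcases n.eq_zero_or_pos with rfl | hn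
  · simp
  calc ∑ m ∈ range n, P.eval (α * ζ ^ m)
      = ∑ k ∈ range (n + 1), P.coeff k * α ^ k * ∑ m ∈ range n, (ζ ^ k) ^ m := by
        simp_rw [eval_eq_sum_range' (Nat.lt_succ_of_le hP), mul_sum]
        rw [sum_comm]
        refine sum_congr rfl fun k _ => sum_congr rfl fun m _ => ?_
        ring
    _ = P.coeff 0 * α ^ 0 * n + P.coeff n * α ^ n * n := by
        simp_rw [hζ.sum_range_pow_pow, mul_ite, mul_zero]
        rw [sum_eq_add_of_mem 0 n (by simp) (by simp) hn.ne]
        · simp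
        · intro k hk ⟨hk0, hkn⟩
          rw [if_neg (Nat.not_dvd_of_pos_of_lt (Nat.pos_of_ne_zero hk0)
            (lt_of_le_of_ne (Nat.lt_succ_iff.1 (mem_range.1 hk)) hkn))]
    _ = n * (P.coeff 0 + P.coeff n * α ^ n) := by ring

theorem prod_sub_pow_eq (hζ : IsPrimitiveRoot ζ n) (hn : 0 < n) (x : R) :
    ∏ j : Fin n, (x - ζ ^ (j : ℕ)) = x ^ n - 1 := by
  have := congrArg (eval x) (X_pow_sub_C_eq_prod hζ hn (one_pow n))
  simp only [eval_sub, eval_pow, eval_X, eval_C, eval_prod, mul_one] at this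
  rw [this, Fin.prod_univ_eq_prod_range (fun j => x - ζ ^ j)]

end IsPrimitiveRoot

namespace Complex

open scoped ComplexConjugate

theorem exists_norm_eq_one_pow_eq {w : ℂ} (hw : ‖w‖ = 1) {n : ℕ} (hn : n ≠ 0) :
    ∃ z : ℂ, ‖z‖ = 1 ∧ z ^ n = w := by
  obtain ⟨z, hz⟩ := IsAlgClosed.exists_pow_nat_eq w (Nat.pos_of_ne_zero hn)
  refine ⟨z, (pow_eq_one_iff_of_nonneg (norm_nonneg z) hn).1 ?_, hz⟩
  rw [← norm_pow, hz, hw]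

theorem exists_norm_eq_one_two_le_norm_eval {P : ℂ[X]} (hP : P.Monic) (hdeg : P.natDegree ≠ 0)
    (h0 : ‖P.coeff 0‖ = 1) : ∃ x : ℂ, ‖x‖ = 1 ∧ 2 ≤ ‖P.eval x‖ := by
  set n := P.natDegree
  obtain ⟨α, hα, hαn⟩ := exists_norm_eq_one_pow_eq h0 hdeg
  obtain ⟨ζ, hζ⟩ : ∃ ζ : ℂ, IsPrimitiveRoot ζ n := ⟨_, isPrimitiveRoot_exp n hdeg⟩
  have hsum : ∑ m ∈ range n, P.eval (α * ζ ^ m) = n * (2 * P.coeff 0) := by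
    rw [hζ.sum_range_eval_mul_pow le_rfl, hP.coeff_natDegree, hαn]
    ring
  have hle : ∑ _m ∈ range n, (2 : ℝ) ≤ ∑ m ∈ range n, ‖P.eval (α * ζ ^ m)‖ :=
    calc ∑ _m ∈ range n, (2 : ℝ) = ‖∑ m ∈ range n, P.eval (α * ζ ^ m)‖ := by
          simp [hsum, h0, mul_comm]
      _ ≤ ∑ m ∈ range n, ‖P.eval (α * ζ ^ m)‖ := norm_sum_le _ _
  obtain ⟨m, -, hm⟩ := exists_le_of_sum_le (nonempty_range_iff.2 hdeg) hle
  exact ⟨α * ζ ^ m, by simp [hα, hζ.norm'_eq_one hdeg], hm⟩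

theorem exists_norm_eq_one_two_le_prod_norm_sub {n : ℕ} (hn : n ≠ 0) {y : Fin n → ℂ}
    (hy : ∀ j, ‖y j‖ = 1) : ∃ x : ℂ, ‖x‖ = 1 ∧ 2 ≤ ∏ j, ‖x - y j‖ := by
  have hP : (∏ j, (X - C (y j))).Monic := monic_prod_of_monic _ _ fun j _ => monic_X_sub_C _
  obtain ⟨x, hx, h2⟩ := exists_norm_eq_one_two_le_norm_eval hP
    (by simpa [natDegree_prod_of_monic _ _ fun j _ => monic_X_sub_C (y j)])
    (by simp [coeff_zero_eq_eval_zero, eval_prod, norm_prod, hy])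
  exact ⟨x, hx, by simpa [eval_prod, norm_prod] using h2⟩

theorem isGreatest_prod_norm_sub_pow {n : ℕ} (hn : n ≠ 0) {ζ : ℂ} (hζ : IsPrimitiveRoot ζ n) :
    IsGreatest {t | ∃ x : ℂ, ‖x‖ = 1 ∧ t = ∏ j : Fin n, ‖x - ζ ^ (j : ℕ)‖} 2 := by
  have hprod (x : ℂ) : ∏ j : Fin n, ‖x - ζ ^ (j : ℕ)‖ = ‖x ^ n - 1‖ := by
    rw [← norm_prod, hζ.prod_sub_pow_eq (Nat.pos_of_ne_zero hn)]
  refine ⟨?_, ?_⟩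
  · obtain ⟨x, hx, hxn⟩ := exists_norm_eq_one_pow_eq (norm_neg (1 : ℂ) ▸ norm_one) hn
    refine ⟨x, hx, ?_⟩
    rw [hprod, hxn]
    norm_num
  · rintro t ⟨x, hx, rfl⟩
    calc ∏ j : Fin n, ‖x - ζ ^ (j : ℕ)‖ = ‖x ^ n - 1‖ := hprod x
      _ ≤ ‖x ^ n‖ + ‖(1 : ℂ)‖ := norm_sub_le _ _
      _ = 2 := by norm_num [hx]

theorem sphereChebyshevConst_eq_two {n : ℕ} (hn : n ≠ 0) : sphereChebyshevConst ℂ n = 2 := by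
  refine IsLeast.csInf_eq ⟨?_, ?_⟩
  · have hζ := isPrimitiveRoot_exp n hn
    exact ⟨fun j => _ ^ (j : ℕ), fun j => by simp [hζ.norm'_eq_one hn],
      (isGreatest_prod_norm_sub_pow hn hζ).csSup_eq.symm⟩
  · rintro _ ⟨y, hy, rfl⟩
    obtain ⟨x, hx, h2⟩ := exists_norm_eq_one_two_le_prod_norm_sub hn hy
    exact h2.trans (le_csSup (bddAbove_prod_norm_sub hy) ⟨x, hx, rfl⟩)

theorem two_mul_abs_inner_eq_norm_sq_add_sq {u x : ℂ} (hu : ‖u‖ = 1) (hx : ‖x‖ = 1) :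
    2 * |⟪u, x⟫_ℝ| = ‖x ^ 2 + u ^ 2‖ := by
  have hu0 : u ≠ 0 := norm_ne_zero_iff.1 (by simp [hu])
  have hx0 : x ≠ 0 := norm_ne_zero_iff.1 (by simp [hx])
  have h : x ^ 2 + u ^ 2 = u * x * (x * conj u + conj (x * conj u)) := by
    rw [map_mul, conj_conj, ← inv_eq_conj hu, ← inv_eq_conj hx]
    field_simp
  rw [Complex.inner, h, add_conj, norm_mul, norm_mul, hu, hx, norm_real, Real.norm_eq_abs,
    abs_mul, abs_two, one_mul, one_mul]

theorem norm_prod_inner_eq {n : ℕ} {u : Fin n → ℂ} (hu : ∀ j, ‖u j‖ = 1) {x : ℂ}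
    (hx : ‖x‖ = 1) : ‖∏ j, ⟪u j, x⟫_ℝ‖ = (2 ^ n)⁻¹ * ∏ j, ‖x ^ 2 - -u j ^ 2‖ := by
  simp_rw [norm_prod, sub_neg_eq_add, ← two_mul_abs_inner_eq_norm_sq_add_sq (hu _) hx,
    prod_mul_distrib, Real.norm_eq_abs]
  simp

theorem supNormProd_eq_of_apply_eq_inner {n : ℕ} {f : Fin n → ℂ →L[ℝ] ℝ} {u : Fin n → ℂ}
    (hu : ∀ j, ‖u j‖ = 1) (hf : ∀ j x, f j x = ⟪u j, x⟫_ℝ) :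
    supNormProd f = (2 ^ n)⁻¹ * sSup {t | ∃ w : ℂ, ‖w‖ = 1 ∧ t = ∏ j, ‖w - -u j ^ 2‖} := by
  rw [supNormProd_eq_sSup_sphere, ← smul_eq_mul, ← Real.sSup_smul_of_nonneg (by positivity)]
  congr 1
  ext t
  simp only [hf, Set.mem_smul_set, smul_eq_mul]
  constructor
  · rintro ⟨x, hx, rfl⟩
    exact ⟨_, ⟨x ^ 2, by simp [hx], rfl⟩, (norm_prod_inner_eq hu hx).symm⟩
  · rintro ⟨_, ⟨w, hw, rfl⟩, rfl⟩
    obtain ⟨x, hx, rfl⟩ := exists_norm_eq_one_pow_eq hw two_ne_zero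
    exact ⟨x, hx, (norm_prod_inner_eq hu hx).symm⟩

theorem polarizationConst_eq (n : ℕ) :
    polarizationConst ℝ ℂ n = 2 ^ n / sphereChebyshevConst ℂ n := by
  have hsets : {y | ∃ f : Fin n → ℂ →L[ℝ] ℝ, (∀ j, ‖f j‖ = 1) ∧ y = supNormProd f} =
      ((2 : ℝ) ^ n)⁻¹ • {s | ∃ y : Fin n → ℂ, (∀ j, ‖y j‖ = 1) ∧
        s = sSup {t | ∃ x : ℂ, ‖x‖ = 1 ∧ t = ∏ j, ‖x - y j‖}} := by
    ext t
    rw [Set.mem_smul_set]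
    constructor
    · rintro ⟨f, hf, rfl⟩
      set u := fun j => (InnerProductSpace.toDual ℝ ℂ).symm (f j)
      have hu (j : Fin n) : ‖u j‖ = 1 := by simp [u, hf]
      have hfu (j : Fin n) (x : ℂ) : f j x = ⟪u j, x⟫_ℝ :=
        InnerProductSpace.toDual_symm_apply.symm
      exact ⟨_, ⟨fun j => -u j ^ 2, fun j => by simp [hu], rfl⟩,
        (supNormProd_eq_of_apply_eq_inner hu hfu).symm⟩
    · rintro ⟨_, ⟨y, hy, rfl⟩, rfl⟩
      choose u hu hu2 using fun j =>
        exists_norm_eq_one_pow_eq (w := -y j) (by simp [hy]) two_ne_zero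
      refine ⟨fun j => innerSL ℝ (u j), fun j => by simp [hu], ?_⟩
      rw [supNormProd_eq_of_apply_eq_inner hu fun j x => innerSL_apply_apply ℝ (u j) x]
      simp [hu2]
  rw [polarizationConst, sphereChebyshevConst, hsets, Real.sInf_smul_of_nonneg (by positivity),
    smul_eq_mul, mul_inv, inv_inv, div_eq_mul_inv]

end Complex

/-- `cₙ(ℝ²) = 2^{n-1}`; equivalently the n-th metric Chebyshev constant of the unit
circle is 2: for any `y₁,…,yₙ ∈ S¹` there is `y ∈ S¹` with `∏ⱼ ‖y-yⱼ‖ ≥ 2`, and 2 is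
optimal. -/
theorem polarizationConst_euclidean_real_two (n : ℕ) (hn : 1 ≤ n) :
    polarizationConst ℝ (EuclideanSpace ℝ (Fin 2)) n = (2 : ℝ) ^ (n - 1) ∧
      (∀ y : Fin n → EuclideanSpace ℝ (Fin 2), (∀ j, ‖y j‖ = 1) →
        ∃ x : EuclideanSpace ℝ (Fin 2), ‖x‖ = 1 ∧ (2 : ℝ) ≤ ∏ j, ‖x - y j‖) ∧
      sInf {s : ℝ | ∃ y : Fin n → EuclideanSpace ℝ (Fin 2), (∀ j, ‖y j‖ = 1) ∧
          s = sSup {t : ℝ | ∃ x : EuclideanSpace ℝ (Fin 2), ‖x‖ = 1 ∧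
            t = ∏ j, ‖x - y j‖}} = 2 := by
  have hn0 : n ≠ 0 := Nat.one_le_iff_ne_zero.1 hn
  let e : ℂ ≃ₗᵢ[ℝ] EuclideanSpace ℝ (Fin 2) := Complex.orthonormalBasisOneI.repr
  refine ⟨?_, fun y hy => ?_, ?_⟩
  · rw [← polarizationConst_congr e, Complex.polarizationConst_eq,
      Complex.sphereChebyshevConst_eq_two hn0, pow_sub₀ _ two_ne_zero hn, pow_one,
      div_eq_mul_inv]
  · obtain ⟨x, hx, h2⟩ := Complex.exists_norm_eq_one_two_le_prod_norm_sub hn0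
      (y := fun j => e.symm (y j)) (by simpa using hy)
    refine ⟨e x, by simpa using hx, ?_⟩
    simpa [← e.symm.norm_map] using h2
  · change sphereChebyshevConst _ n = 2
    rw [← sphereChebyshevConst_congr e, Complex.sphereChebyshevConst_eq_two hn0]
end

section
/- Gross's rendezvous theorem: for every compact connected metric space (X, ρ) there exists a unique number r = r(X) such that for every n and every choice of points x₁,...,xₙ ∈ X there exists x ∈ X with (1/n) ∑_{j=1}^n ρ(x, x_j) = r. -/
/-!
For a tuple `x` of points, `avgDist x` is continuous on `X`. Averaging `avgDist x` over the points
of another tuple `z` gives the same number as averaging `avgDist z` over the points of `x`, so the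
minimum of any `avgDist x` lies below the maximum of any `avgDist z`. The supremum of all these
minima therefore lies in the range of every `avgDist x`, which is an interval because `X` is
connected.

Uniqueness amounts to the supremum of the minima being equal to the infimum of the maxima. On a
finite `ε`-net this is von Neumann's minimax theorem for the matrix of distances; the optimal mixed
strategies are weighted averages of distances, and approximating the weights by rationals turns
them into plain averages over tuples with repetitions.
-/

open Finset Matrix Set

theorem Matrix.exists_saddle_stdSimplex {ι : Type*} [Fintype ι] [Nonempty ι]
    (A : Matrix ι ι ℝ) :
    ∃ a ∈ stdSimplex ℝ ι, ∃ b ∈ stdSimplex ℝ ι, ∃ v : ℝ,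
      (∀ j, (a ᵥ* A) j ≤ v) ∧ ∀ i, v ≤ (A *ᵥ b) i := by
  classical
  set B : (ι → ℝ) →ₗ[ℝ] (ι → ℝ) →ₗ[ℝ] ℝ := toLinearMap₂' ℝ A
  have hne : (stdSimplex ℝ ι).Nonempty := ⟨_, single_mem_stdSimplex ℝ (Classical.arbitrary ι)⟩
  have hconv := convex_stdSimplex ℝ ι
  have hcpt := isCompact_stdSimplex ℝ ι
  obtain ⟨a, ha, b, hb, hab⟩ := Sion.exists_isSaddlePointOn (f := fun x y => B x y)
    hne hconv hcpt
    (fun y _ =>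
      (B.flip y).continuous_of_finiteDimensional.lowerSemicontinuous.lowerSemicontinuousOn _)
    (fun y _ => ((B.flip y).convexOn hconv).quasiconvexOn)
    hconv hne hcpt
    (fun x _ =>
      (B x).continuous_of_finiteDimensional.upperSemicontinuous.upperSemicontinuousOn _)
    (fun x _ => ((B x).concaveOn hconv).quasiconcaveOn)
  have hB (x y : ι → ℝ) : B x y = x ⬝ᵥ A *ᵥ y := toLinearMap₂'_apply' A x y
  refine ⟨a, ha, b, hb, a ⬝ᵥ A *ᵥ b, fun j => ?_, fun i => ?_⟩
  · have h : B a (Pi.single j 1) ≤ B a b := hab a ha _ (single_mem_stdSimplex ℝ j)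
    rw [hB, hB, mulVec_single_one] at h
    exact h
  · have h : B a b ≤ B (Pi.single i 1) b := hab _ (single_mem_stdSimplex ℝ i) b hb
    rw [hB, hB, single_one_dotProduct] at h
    exact h

section Rendezvous

variable {X : Type*} [PseudoMetricSpace X]

noncomputable def avgDist {n : ℕ} (x : Fin n → X) (y : X) : ℝ := (∑ j, dist y (x j)) / n

noncomputable def weightedDist {ι : Type*} [Fintype ι] (w : ι → ℝ) (p : ι → X) (y : X) : ℝ :=
  ∑ i, w i * dist y (p i)

variable (X) in
def IsRendezvousValue (r : ℝ) : Prop :=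
  ∀ n : ℕ, 0 < n → ∀ x : Fin n → X, ∃ y, avgDist x y = r

theorem continuous_avgDist {n : ℕ} (x : Fin n → X) : Continuous (avgDist x) :=
  (continuous_finsetSum _ fun _ _ => continuous_id.dist continuous_const).div_const _

theorem sum_avgDist_mul {n m : ℕ} (hn : 0 < n) (x : Fin n → X) (z : Fin m → X) :
    ∑ k, avgDist x (z k) * n = ∑ k, ∑ j, dist (x j) (z k) := by
  have : (n : ℝ) ≠ 0 := by positivity
  simp only [avgDist, div_mul_cancel₀ _ this, dist_comm]

theorem exists_avgDist_le_avgDist {n m : ℕ} (hn : 0 < n) (hm : 0 < m) (x : Fin n → X)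
    (z : Fin m → X) : ∃ k i, avgDist x (z k) ≤ avgDist z (x i) := by
  have : Nonempty (Fin n) := ⟨⟨0, hn⟩⟩
  have : Nonempty (Fin m) := ⟨⟨0, hm⟩⟩
  have hsum : ∑ q : Fin m × Fin n, avgDist x (z q.1) = ∑ q : Fin m × Fin n, avgDist z (x q.2) := by
    rw [Fintype.sum_prod_type, Fintype.sum_prod_type_right]
    simp only [sum_const, card_univ, Fintype.card_fin, nsmul_eq_mul, mul_comm (n : ℝ),
      mul_comm (m : ℝ), sum_avgDist_mul hn, sum_avgDist_mul hm]
    rw [sum_comm]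
    simp only [dist_comm]
  obtain ⟨⟨k, i⟩, -, h⟩ := exists_le_of_sum_le univ_nonempty hsum.le
  exact ⟨k, i, h⟩

variable (X) in
theorem exists_isRendezvousValue [CompactSpace X] [ConnectedSpace X] :
    ∃ r, IsRendezvousValue X r := by
  set S : Set ℝ := {s | ∃ n, 0 < n ∧ ∃ x : Fin n → X, ∀ y, s ≤ avgDist x y}
  have hS_le {m : ℕ} (hm : 0 < m) (z : Fin m → X) {y₁ : X} (hy₁ : IsMaxOn (avgDist z) univ y₁) :
      ∀ s ∈ S, s ≤ avgDist z y₁ := by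
    rintro s ⟨n, hn, x, hs⟩
    obtain ⟨k, i, h⟩ := exists_avgDist_le_avgDist hn hm x z
    exact (hs _).trans (h.trans (hy₁ (mem_univ _)))
  refine ⟨sSup S, fun n hn x => ?_⟩
  have hf := continuous_avgDist x
  obtain ⟨y₀, -, hy₀⟩ := isCompact_univ.exists_isMinOn univ_nonempty hf.continuousOn
  obtain ⟨y₁, -, hy₁⟩ := isCompact_univ.exists_isMaxOn univ_nonempty hf.continuousOn
  have hmin : avgDist x y₀ ∈ S := ⟨n, hn, x, fun y => hy₀ (mem_univ y)⟩
  have hmem : sSup S ∈ Icc (avgDist x y₀) (avgDist x y₁) :=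
    ⟨le_csSup ⟨_, hS_le hn x hy₁⟩ hmin, csSup_le ⟨_, hmin⟩ (hS_le hn x hy₁)⟩
  exact intermediate_value_univ y₀ y₁ hf hmem

section Weighted

variable {ι : Type*} [Fintype ι]

theorem weightedDist_le_add_dist {w : ι → ℝ} (hw : w ∈ stdSimplex ℝ ι) (p : ι → X) (y y' : X) :
    weightedDist w p y ≤ weightedDist w p y' + dist y y' :=
  calc weightedDist w p y ≤ ∑ i, w i * (dist y y' + dist y' (p i)) :=
        sum_le_sum fun i _ => mul_le_mul_of_nonneg_left (dist_triangle _ _ _) (hw.1 i)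
    _ = weightedDist w p y' + dist y y' := by
        simp only [weightedDist, mul_add, sum_add_distrib, ← sum_mul, hw.2, one_mul, add_comm]

theorem abs_weightedDist_sub_le [BoundedSpace X] (w w' : ι → ℝ) (p : ι → X) (y : X) :
    |weightedDist w p y - weightedDist w' p y| ≤
      (∑ i, |w i - w' i|) * Metric.diam (univ : Set X) := by
  rw [weightedDist, weightedDist, ← sum_sub_distrib, sum_mul]
  refine (abs_sum_le_sum_abs _ _).trans (sum_le_sum fun i _ => ?_)
  rw [← sub_mul, abs_mul, abs_of_nonneg dist_nonneg]
  exact mul_le_mul_of_nonneg_left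
    (Metric.dist_le_diam_of_mem BoundedSpace.bounded_univ trivial trivial) (abs_nonneg _)

theorem exists_nat_approx_stdSimplex {w : ι → ℝ} (hw : w ∈ stdSimplex ℝ ι) {η : ℝ} (hη : 0 < η) :
    ∃ c : ι → ℕ, 0 < ∑ i, c i ∧ ∑ i, |(c i : ℝ) / (∑ j, c j : ℕ) - w i| ≤ η := by
  set k := Fintype.card ι
  obtain ⟨N, hN⟩ := exists_nat_gt (k + 2 * k / η)
  set c : ι → ℕ := fun i => ⌊N * w i⌋₊
  set T := ∑ i, c i
  have hc_le (i : ι) : (c i : ℝ) ≤ N * w i := Nat.floor_le (by have := hw.1 i; positivity)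
  have hc_gt (i : ι) : N * w i - 1 < c i := by linarith [Nat.lt_floor_add_one (N * w i)]
  have hT : (T : ℝ) = ∑ i, (c i : ℝ) := by push_cast [T]; rfl
  have hT_le : (T : ℝ) ≤ N := by
    rw [hT]
    calc ∑ i, (c i : ℝ) ≤ ∑ i, N * w i := sum_le_sum fun i _ => hc_le i
      _ = N := by rw [← mul_sum, hw.2, mul_one]
  have hT_ge : (N : ℝ) - k ≤ T := by
    rw [hT]
    calc (N : ℝ) - k = ∑ i, (N * w i - 1) := by
          rw [sum_sub_distrib, ← mul_sum, hw.2, mul_one]; simp [k]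
      _ ≤ ∑ i, (c i : ℝ) := sum_le_sum fun i _ => (hc_gt i).le
  have hk : 0 ≤ 2 * k / η := by positivity
  have hNpos : (0 : ℝ) < N := by linarith
  have hTpos : (0 : ℝ) < T := by linarith
  refine ⟨c, by exact_mod_cast hTpos, ?_⟩
  calc ∑ i, |(c i : ℝ) / T - w i| ≤ ∑ i, ((c i / T - c i / N) + (w i - c i / N)) := by
        refine sum_le_sum fun i _ => abs_sub_le_iff.2 ⟨?_, ?_⟩
        · have : (c i : ℝ) / N ≤ w i := by rw [div_le_iff₀ hNpos]; linarith [hc_le i]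
          linarith
        · have : (c i : ℝ) / N ≤ c i / T := div_le_div_of_nonneg_left (by positivity) hTpos hT_le
          linarith
    _ = 2 * ((N - T) / N) := by
        rw [sum_add_distrib, sum_sub_distrib, sum_sub_distrib, ← sum_div, ← sum_div, hw.2, ← hT]
        field_simp
        ring
    _ ≤ 2 * (k / N) := by gcongr; linarith
    _ ≤ η := by
        have hkN : 2 * k < N * η := (div_lt_iff₀ hη).1 (by linarith)
        rw [← mul_div_assoc, div_le_iff₀ hNpos]
        linarith

theorem exists_tuple_sum_eq_sum_nsmul {α M : Type*} [AddCommMonoid M] (p : ι → α) (c : ι → ℕ) :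
    ∃ z : Fin (∑ i, c i) → α, ∀ f : α → M, ∑ t, f (z t) = ∑ i, c i • f (p i) := by
  let e : (Σ i, Fin (c i)) ≃ Fin (∑ i, c i) := Fintype.equivFinOfCardEq (by simp)
  refine ⟨fun t => p (e.symm t).1, fun f => ?_⟩
  rw [e.symm.sum_comp (fun s => f (p s.1)), Fintype.sum_sigma]
  simp

theorem exists_avgDist_approx_weightedDist [BoundedSpace X] {w : ι → ℝ}
    (hw : w ∈ stdSimplex ℝ ι) (p : ι → X) {ε : ℝ} (hε : 0 < ε) :
    ∃ m, 0 < m ∧ ∃ z : Fin m → X, ∀ y, |avgDist z y - weightedDist w p y| ≤ ε := by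
  set D := Metric.diam (univ : Set X)
  have hD : 0 ≤ D := Metric.diam_nonneg
  obtain ⟨c, hc, hcw⟩ := exists_nat_approx_stdSimplex hw (η := ε / (D + 1)) (by positivity)
  obtain ⟨z, hz⟩ := exists_tuple_sum_eq_sum_nsmul (M := ℝ) p c
  refine ⟨_, hc, z, fun y => ?_⟩
  have hzw : avgDist z y = weightedDist (fun i => (c i : ℝ) / (∑ j, c j : ℕ)) p y := by
    rw [avgDist, hz, weightedDist, sum_div]
    simp only [nsmul_eq_mul, div_mul_eq_mul_div]
  calc |avgDist z y - weightedDist w p y|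
      ≤ (∑ i, |(c i : ℝ) / (∑ j, c j : ℕ) - w i|) * D := hzw ▸ abs_weightedDist_sub_le _ _ _ _
    _ ≤ ε / (D + 1) * D := by gcongr
    _ ≤ ε := by
        rw [div_mul_eq_mul_div, div_le_iff₀ (by positivity)]
        nlinarith

end Weighted

theorem exists_weightedDist_minimax_approx [CompactSpace X] [Nonempty X] {ε : ℝ} (hε : 0 < ε) :
    ∃ (t : Finset X) (a b : t → ℝ) (v : ℝ), a ∈ stdSimplex ℝ t ∧ b ∈ stdSimplex ℝ t ∧
      (∀ y, v - ε ≤ weightedDist b Subtype.val y) ∧ ∀ y, weightedDist a Subtype.val y ≤ v + ε := by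
  obtain ⟨t, -, ht⟩ := isCompact_univ.elim_nhds_subcover (fun q : X => Metric.ball q ε)
    fun q _ => Metric.ball_mem_nhds q hε
  have hnet (y : X) : ∃ q : t, dist q.1 y < ε := by
    obtain ⟨q, hq, hy⟩ := mem_iUnion₂.1 (ht (mem_univ y))
    exact ⟨⟨q, hq⟩, by rw [dist_comm]; exact hy⟩
  have : Nonempty t := let ⟨q, _⟩ := hnet (Classical.arbitrary X); ⟨q⟩
  obtain ⟨a, ha, b, hb, v, hav, hvb⟩ :=
    Matrix.exists_saddle_stdSimplex (of fun i j : t => dist (i : X) j)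
  refine ⟨t, a, b, v, ha, hb, fun y => ?_, fun y => ?_⟩
  all_goals obtain ⟨q, hq⟩ := hnet y
  · have hq' : v ≤ weightedDist b Subtype.val q := by
      simpa only [weightedDist, mulVec, dotProduct, of_apply, mul_comm] using hvb q
    linarith [weightedDist_le_add_dist hb Subtype.val q y]
  · have hq' : weightedDist a Subtype.val q ≤ v := by
      simpa only [weightedDist, vecMul, dotProduct, of_apply, dist_comm] using hav q
    linarith [weightedDist_le_add_dist ha Subtype.val y q, dist_comm y q]

theorem exists_avgDist_minimax_approx [CompactSpace X] [Nonempty X] {ε : ℝ} (hε : 0 < ε) :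
    ∃ v : ℝ, (∃ n, 0 < n ∧ ∃ x : Fin n → X, ∀ y, v - ε ≤ avgDist x y) ∧
      ∃ m, 0 < m ∧ ∃ z : Fin m → X, ∀ y, avgDist z y ≤ v + ε := by
  obtain ⟨t, a, b, v, ha, hb, hvb, hav⟩ := exists_weightedDist_minimax_approx (X := X) (half_pos hε)
  obtain ⟨n, hn, x, hx⟩ := exists_avgDist_approx_weightedDist hb Subtype.val (half_pos hε)
  obtain ⟨m, hm, z, hz⟩ := exists_avgDist_approx_weightedDist ha Subtype.val (half_pos hε)
  refine ⟨v, ⟨n, hn, x, fun y => ?_⟩, m, hm, z, fun y => ?_⟩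
  · linarith [hvb y, (abs_le.1 (hx y)).1]
  · linarith [hav y, (abs_le.1 (hz y)).2]

theorem IsRendezvousValue.le [CompactSpace X] [Nonempty X] {r s : ℝ}
    (hr : IsRendezvousValue X r) (hs : IsRendezvousValue X s) : s ≤ r := by
  refine le_of_forall_pos_le_add fun ε hε => ?_
  obtain ⟨v, ⟨n, hn, x, hx⟩, m, hm, z, hz⟩ := exists_avgDist_minimax_approx (X := X) (half_pos hε)
  obtain ⟨y, rfl⟩ := hr n hn x
  obtain ⟨y', rfl⟩ := hs m hm z
  linarith [hx y, hz y']

end Rendezvous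

theorem gross_rendezvous_general {X : Type*} [MetricSpace X] [CompactSpace X] [ConnectedSpace X] :
    ∃! r : ℝ, ∀ n : ℕ, 0 < n → ∀ x : Fin n → X, ∃ y : X,
      (∑ j, dist y (x j)) / (n : ℝ) = r := by
  obtain ⟨r, hr⟩ := exists_isRendezvousValue X
  exact ⟨r, hr, fun s (hs : IsRendezvousValue X s) => le_antisymm (hr.le hs) (hs.le hr)⟩

/-- Gross's rendezvous theorem: every nonempty compact connected metric space has a
unique rendezvous number `r`: for every `n ≥ 1` and points `x₁,…,xₙ` there is `x` whose
average distance to the `xⱼ` equals `r`. -/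
theorem gross_rendezvous {X : Type*} [MetricSpace X] [CompactSpace X] [ConnectedSpace X]
    [Nonempty X] :
    ∃! r : ℝ, ∀ n : ℕ, 0 < n → ∀ x : Fin n → X, ∃ y : X,
      (∑ j, dist y (x j)) / (n : ℝ) = r :=
  gross_rendezvous_general
end

section
/- For the Chebyshev polynomial T_n(x) := ((x+√(x²−1))ⁿ + (x−√(x²−1))ⁿ)/2 and any real x with |x| > 1, T_n(|x|) = sup { |p(x)| : p a real polynomial of degree ≤ n, |p(t)| ≤ 1 for all t ∈ [−1,1] }; that is, the Chebyshev polynomial is extremal for the Chebyshev growth problem outside the unit interval. -/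
/-!
For `x ≥ 1` and `P` of degree at most `n` bounded by `1` on `[-1, 1]`, Lagrange interpolation at
the extrema of `T_n` gives `P(x) ≤ T_n(x)` (Mathlib's bound on iterated derivatives, order `0`).
Applying it to `±P` and to `P(-X)` yields `|P(x)| ≤ T_n(|x|)` whenever `|x| ≥ 1`, and `T_n` attains
this bound by parity. The closed form comes from the three-term recurrence, since `y ± √(y² - 1)`
are the roots of `z² - 2yz + 1`.
-/

open Polynomial Real Set

namespace Polynomial.Chebyshev

theorem two_mul_eval_T_eq_add_pow {R : Type*} [CommRing R] {y s : R} (hs : s ^ 2 = y ^ 2 - 1)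
    (n : ℕ) : 2 * (T R n).eval y = (y + s) ^ n + (y - s) ^ n := by
  induction n using Nat.twoStepInduction with
  | zero => norm_num [one_add_one_eq_two]
  | one => simp only [Nat.cast_one, T_one, eval_X]; ring
  | more n ih₀ ih₁ =>
    push_cast at ih₁ ⊢
    simp only [T_add_two, eval_sub, eval_mul, eval_X, eval_ofNat]
    linear_combination (2 * y) * ih₁ - ih₀ - ((y + s) ^ n + (y - s) ^ n) * hs

theorem abs_eval_le_eval_T_real_of_one_le {n : ℕ} {P : ℝ[X]} (hPdeg : P.degree ≤ n)
    (hPbnd : ∀ t ∈ Icc (-1) 1, |P.eval t| ≤ 1) {x : ℝ} (hx : 1 ≤ x) :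
    |P.eval x| ≤ (T ℝ n).eval x := by
  have hneg : -P.eval x ≤ (T ℝ n).eval x := by
    simpa using eval_iterate_derivative_le_of_forall_abs_le_one (k := 0) hx
      (P := -P) (by rwa [degree_neg]) (by simpa using hPbnd)
  exact abs_le.2 ⟨neg_le.1 hneg,
    eval_iterate_derivative_le_of_forall_abs_le_one (k := 0) hx hPdeg hPbnd⟩

theorem abs_eval_le_eval_T_real_abs {n : ℕ} {P : ℝ[X]} (hPdeg : P.degree ≤ n)
    (hPbnd : ∀ t ∈ Icc (-1) 1, |P.eval t| ≤ 1) {x : ℝ} (hx : 1 ≤ |x|) :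
    |P.eval x| ≤ (T ℝ n).eval |x| := by
  rcases le_total 0 x with h | h
  · rw [abs_of_nonneg h] at hx ⊢
    exact abs_eval_le_eval_T_real_of_one_le hPdeg hPbnd hx
  · rw [abs_of_nonpos h] at hx ⊢
    simpa using abs_eval_le_eval_T_real_of_one_le (P := P.comp (-X)) (by rwa [degree_comp_neg_X])
      (fun t ht => by simpa using hPbnd (-t) ⟨by linarith [ht.2], by linarith [ht.1]⟩) hx

theorem abs_eval_T_real_eq_eval_T_real_abs {x : ℝ} (hx : 1 ≤ |x|) (n : ℕ) :
    |(T ℝ n).eval x| = (T ℝ n).eval |x| := by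
  have hpos : 0 ≤ (T ℝ n).eval |x| := zero_le_one.trans (one_le_eval_T_real n hx)
  rcases le_total 0 x with h | h
  · rw [abs_of_nonneg h, abs_of_nonneg (by rwa [abs_of_nonneg h] at hpos)]
  · rw [abs_of_nonpos h] at hpos ⊢
    rw [← neg_neg x, T_eval_neg, abs_mul, neg_neg, abs_of_nonneg hpos]
    simp

end Polynomial.Chebyshev

open Polynomial.Chebyshev

/-- For `|x| > 1`, the Chebyshev polynomial value
`T_n(|x|) = ((|x|+√(x²-1))ⁿ + (|x|-√(x²-1))ⁿ)/2` equals the Chebyshev extremal quantity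
`sup { |p(x)| : deg p ≤ n, ‖p‖_{[-1,1]} ≤ 1 }`. -/
theorem chebyshev_growth (n : ℕ) (x : ℝ) (hx : 1 < |x|) :
    ((|x| + Real.sqrt (x ^ 2 - 1)) ^ n + (|x| - Real.sqrt (x ^ 2 - 1)) ^ n) / 2 =
      sSup {y : ℝ | ∃ p : Polynomial ℝ, p.natDegree ≤ n ∧
        (∀ t ∈ Set.Icc (-1 : ℝ) 1, |p.eval t| ≤ 1) ∧ y = |p.eval x|} := by
  have hs : √(x ^ 2 - 1) ^ 2 = |x| ^ 2 - 1 := by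
    rw [sq_abs, sq_sqrt (by nlinarith [sq_abs x])]
  rw [← two_mul_eval_T_eq_add_pow hs, mul_div_cancel_left₀ _ two_ne_zero]
  refine (IsGreatest.csSup_eq ⟨?_, ?_⟩).symm
  · exact ⟨T ℝ n, by simp, fun t ht => abs_eval_T_real_le_one n (abs_le.2 ht),
      (abs_eval_T_real_eq_eval_T_real_abs hx.le n).symm⟩
  · rintro _ ⟨p, hdeg, hp, rfl⟩
    exact abs_eval_le_eval_T_real_abs (degree_le_of_natDegree_le hdeg) hp hx.le
end

section
/- Inscribed Ellipse Lemma: Let K be a subset of a real vector space X, x ∈ K, and suppose the ellipse r(t) = (cos t)·a + b(sin t)·y + x − a (t ∈ [−π,π)) lies inside K, where a ∈ X, y ∈ X, b > 0. Then for any polynomial p : X → ℝ of degree at most n, |⟨Dp(x), y⟩| ≤ (n/b)·√(‖p‖_K² − p(x)²), where Dp(x) is the derivative of p at x and ‖p‖_K := sup_K |p|. -/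
/-!
Along the ellipse, `g t = p (cos t • a + sin t • (b • y) + (x - a))` is a real trigonometric
polynomial of degree at most `n` (expand the multilinear forms), bounded by `M = ‖p‖_K`, with
`g 0 = p x` and `g' 0 = b ⟨Dp(x), y⟩`. The claim is thus the Bernstein–Szegő inequality
`|g' t₀| ≤ n √(M² - g(t₀)²)`. For it, compare `g` with the sinusoid `M sin (n (t - t₀) + α)`
through `(t₀, g t₀)`: if `g` were steeper at `t₀`, their difference would change sign between
consecutive extremal points of the sinusoid and vanish at `t₀`, giving `2n + 1` zeros in one
period, too many for a nonzero trigonometric polynomial of degree `n`.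
-/

/-- A continuous polynomial of degree at most `n` on a real normed space: a finite sum of
diagonals of continuous `k`-linear forms, `k = 0,…,n`. -/
def IsPolyDegLE {X : Type*} [NormedAddCommGroup X] [NormedSpace ℝ X] (n : ℕ)
    (p : X → ℝ) : Prop :=
  ∃ L : (k : Fin (n + 1)) → ContinuousMultilinearMap ℝ (fun _ : Fin (k : ℕ) => X) ℝ,
    ∀ x : X, p x = ∑ k, L k (fun _ => x)

open Set Finset
open scoped Real

theorem exists_mem_Ioo_eq_zero_of_mul_neg {ψ : ℝ → ℝ} {a b : ℝ} (hab : a ≤ b)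
    (hψ : ContinuousOn ψ (Icc a b)) (hsign : ψ a * ψ b < 0) : ∃ z ∈ Ioo a b, ψ z = 0 := by
  rcases mul_neg_iff.1 hsign with ⟨ha, hb⟩ | ⟨ha, hb⟩
  · exact intermediate_value_Ioo' hab hψ ⟨hb, ha⟩
  · exact intermediate_value_Ioo hab hψ ⟨ha, hb⟩

theorem exists_finset_zeros_of_sign_changes {ψ : ℝ → ℝ} (hψ : Continuous ψ) {u : ℕ → ℝ}
    (hu : StrictMono u) (m : ℕ) (hsign : ∀ i < m, ψ (u i) * ψ (u (i + 1)) < 0) :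
    ∃ S : Finset ℝ, #S = m ∧ ↑S ⊆ Ioo (u 0) (u m) ∧ ∀ s ∈ S, ψ s = 0 := by
  have hz (i : Fin m) : ∃ z ∈ Ioo (u i) (u (i + 1)), ψ z = 0 :=
    exists_mem_Ioo_eq_zero_of_mul_neg (hu.monotone (Nat.le_succ i)) hψ.continuousOn
      (hsign i i.2)
  choose z hz_mem hz_zero using hz
  have hz_mono : StrictMono z := fun i j hij =>
    calc z i < u (i + 1) := (hz_mem i).2
      _ ≤ u j := hu.monotone (Nat.succ_le_of_lt hij)
      _ < z j := (hz_mem j).1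
  refine ⟨univ.image z, by simp [card_image_of_injective _ hz_mono.injective], ?_, ?_⟩
  · intro s hs
    obtain ⟨i, -, rfl⟩ := Finset.mem_image.1 hs
    exact ⟨(hu.monotone (Nat.zero_le i)).trans_lt (hz_mem i).1,
      (hz_mem i).2.trans_le (hu.monotone i.2)⟩
  · simp [hz_zero]

theorem HasDerivAt.exists_mem_Ioo_lt_of_pos {ψ : ℝ → ℝ} {ψ' a b : ℝ} (hψ : HasDerivAt ψ ψ' a)
    (hpos : 0 < ψ') (hab : a < b) : ∃ t ∈ Ioo a b, ψ a < ψ t := by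
  have hslope := (hasDerivWithinAt_iff_tendsto_slope' self_notMem_Ioi).1
    (hψ.hasDerivWithinAt (s := Ioi a))
  obtain ⟨t, hslope_pos, ht⟩ :=
    ((hslope.eventually (eventually_gt_nhds hpos)).and (Ioo_mem_nhdsGT hab)).exists
  refine ⟨t, ht, ?_⟩
  rw [slope_def_field] at hslope_pos
  have := (div_pos_iff_of_pos_right (sub_pos.2 ht.1)).1 hslope_pos
  linarith

section TrigPoly

open Polynomial
open Complex (exp I)

/-- Real trigonometric polynomials of degree at most `n`, through their complexification:
`f t = e^{-int} P(e^{it})` for a complex polynomial `P` of degree at most `2n`. -/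
def trigPolyDegreeLE (n : ℕ) : Submodule ℝ (ℝ → ℝ) where
  carrier := {f | ∃ P : ℂ[X], P.natDegree ≤ 2 * n ∧
    ∀ t : ℝ, (f t : ℂ) * exp (t * I) ^ n = P.eval (exp (t * I))}
  add_mem' := by
    rintro f g ⟨P, hP, hfP⟩ ⟨Q, hQ, hgQ⟩
    exact ⟨P + Q, (natDegree_add_le _ _).trans (max_le hP hQ), fun t => by
      simp [← hfP, ← hgQ, add_mul]⟩
  zero_mem' := ⟨0, by simp, by simp⟩
  smul_mem' := by
    rintro c f ⟨P, hP, hfP⟩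
    exact ⟨C (c : ℂ) * P, (natDegree_C_mul_le _ _).trans hP, fun t => by
      simp [← hfP, mul_assoc]⟩

variable {n m : ℕ} {f g : ℝ → ℝ}

theorem trigPolyDegreeLE_mono (h : n ≤ m) : trigPolyDegreeLE n ≤ trigPolyDegreeLE m := by
  obtain ⟨k, rfl⟩ := Nat.exists_eq_add_of_le h
  rintro f ⟨P, hP, hfP⟩
  refine ⟨X ^ k * P, ?_, fun t => ?_⟩
  · grw [natDegree_mul_le, natDegree_X_pow_le]
    omega
  · rw [eval_mul, eval_pow, eval_X, ← hfP, pow_add]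
    ring

theorem mul_mem_trigPolyDegreeLE (hf : f ∈ trigPolyDegreeLE n) (hg : g ∈ trigPolyDegreeLE m) :
    f * g ∈ trigPolyDegreeLE (n + m) := by
  obtain ⟨P, hP, hfP⟩ := hf
  obtain ⟨Q, hQ, hgQ⟩ := hg
  refine ⟨P * Q, ?_, fun t => ?_⟩
  · grw [natDegree_mul_le, hP, hQ]
    omega
  · rw [eval_mul, ← hfP, ← hgQ, pow_add, Pi.mul_apply, Complex.ofReal_mul]
    ring

theorem const_mem_trigPolyDegreeLE_zero (c : ℝ) : (fun _ => c) ∈ trigPolyDegreeLE 0 :=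
  ⟨C (c : ℂ), by simp, by simp⟩

theorem prod_mem_trigPolyDegreeLE {ι : Type*} (s : Finset ι) {F : ι → ℝ → ℝ} {d : ι → ℕ}
    (h : ∀ i ∈ s, F i ∈ trigPolyDegreeLE (d i)) :
    ∏ i ∈ s, F i ∈ trigPolyDegreeLE (∑ i ∈ s, d i) := by
  classical
  induction s using Finset.induction_on with
  | empty => simpa [Pi.one_def] using const_mem_trigPolyDegreeLE_zero 1
  | insert i s hi ih =>
    rw [prod_insert hi, sum_insert hi]
    exact mul_mem_trigPolyDegreeLE (h i (mem_insert_self i s))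
      (ih fun j hj => h j (mem_insert_of_mem hj))

theorem sin_mul_add_mem_trigPolyDegreeLE (n : ℕ) (φ : ℝ) :
    (fun t => Real.sin (n * t + φ)) ∈ trigPolyDegreeLE n := by
  refine ⟨C (exp (φ * I) / (2 * I)) * X ^ (2 * n) - C (exp (-(φ * I)) / (2 * I)), ?_,
    fun t => ?_⟩
  · grw [natDegree_sub_le, natDegree_C_mul_le, natDegree_X_pow_le, natDegree_C]
    omega
  · have e₁ : exp (-((n * t + φ : ℝ) : ℂ) * I) * exp (t * I) ^ n = exp (-(φ * I)) := by
      rw [← Complex.exp_nat_mul, ← Complex.exp_add]; push_cast; ring_nf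
    have e₂ :
        exp ((n * t + φ : ℝ) * I) * exp (t * I) ^ n = exp (φ * I) * exp (t * I) ^ (2 * n) := by
      rw [← Complex.exp_nat_mul, ← Complex.exp_nat_mul, ← Complex.exp_add, ← Complex.exp_add]
      push_cast; ring_nf
    simp only [Complex.ofReal_sin, Complex.sin, eval_sub, eval_mul, eval_C, eval_pow, eval_X]
    rw [div_eq_mul_inv _ (2 * I), div_eq_mul_inv _ (2 * I), mul_inv, Complex.inv_I]
    linear_combination (I / 2) * (e₁ - e₂)

theorem sin_mem_trigPolyDegreeLE_one : Real.sin ∈ trigPolyDegreeLE 1 := by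
  simpa using sin_mul_add_mem_trigPolyDegreeLE 1 0

theorem cos_mem_trigPolyDegreeLE_one : Real.cos ∈ trigPolyDegreeLE 1 := by
  simpa [Real.sin_add_pi_div_two] using sin_mul_add_mem_trigPolyDegreeLE 1 (π / 2)

theorem continuous_of_mem_trigPolyDegreeLE (hf : f ∈ trigPolyDegreeLE n) : Continuous f := by
  obtain ⟨P, -, hfP⟩ := hf
  have hexp (t : ℝ) : exp (t * I) ^ n ≠ 0 := pow_ne_zero _ (Complex.exp_ne_zero _)
  have : Continuous fun t : ℝ => P.eval (exp (t * I)) / exp (t * I) ^ n :=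
    (P.continuous.comp (by fun_prop)).div (by fun_prop) hexp
  have hf (t : ℝ) : f t = (P.eval (exp (t * I)) / exp (t * I) ^ n).re := by
    rw [← hfP, mul_div_cancel_right₀ _ (hexp t), Complex.ofReal_re]
  rw [funext hf]
  exact Complex.continuous_re.comp this

theorem eq_zero_of_mem_trigPolyDegreeLE_of_card_lt (hf : f ∈ trigPolyDegreeLE n) {S : Finset ℝ}
    {a : ℝ} (hS : ↑S ⊆ Ico a (a + 2 * π)) (hcard : 2 * n < #S) (hzero : ∀ s ∈ S, f s = 0) :
    f = 0 := by
  obtain ⟨P, hP, hfP⟩ := hf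
  have hinj : Function.Injective fun s : S => exp (s * I) := by
    rintro ⟨s, hs⟩ ⟨u, hu⟩ h
    exact Subtype.ext <| Circle.exp_injOn_Ico (by linarith) (hS hs) (hS hu) (Subtype.ext h)
  have hP0 : P = 0 := eq_zero_of_natDegree_lt_card_of_eval_eq_zero P hinj
    (fun s => by simp [← hfP, hzero s s.2]) (by simpa using hP.trans_lt hcard)
  funext t
  simpa [hP0, Complex.exp_ne_zero] using hfP t

theorem le_mul_cos_of_hasDerivAt_of_eq_mul_sin {M α t₀ f' : ℝ}
    (hf : f ∈ trigPolyDegreeLE n) (hn : n ≠ 0) (hbd : ∀ t, |f t| < M)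
    (hα : α ∈ Ioo (-(π / 2)) (π / 2)) (hf₀ : f t₀ = M * Real.sin α)
    (hder : HasDerivAt f f' t₀) : f' ≤ n * M * Real.cos α := by
  by_contra! hlt
  have hn' : (0 : ℝ) < n := Nat.cast_pos.2 (Nat.pos_of_ne_zero hn)
  set ψ : ℝ → ℝ := fun t => f t - M * Real.sin (n * (t - t₀) + α)
  have hψ_mem : ψ ∈ trigPolyDegreeLE n := by
    convert sub_mem hf (Submodule.smul_mem _ M (sin_mul_add_mem_trigPolyDegreeLE n (α - n * t₀)))
      using 1
    funext t
    simp only [Pi.sub_apply, Pi.smul_apply, smul_eq_mul, ψ]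
    ring_nf
  have hψ₀ : ψ t₀ = 0 := by simp [ψ, hf₀]
  have hψ_der : HasDerivAt ψ (f' - M * (Real.cos α * n)) t₀ := by
    have := ((((hasDerivAt_id t₀).sub_const t₀).const_mul (n : ℝ)).add_const α).sin
    refine (hder.fun_sub (this.const_mul M)).congr_deriv ?_
    simp
  -- the sinusoid equals `-(-1) ^ j * M` at `τ j`, so `ψ` alternates in sign along `τ`
  set τ : ℕ → ℝ := fun j => t₀ + (j * π - π / 2 - α) / n
  have hψτ (j : ℕ) : 0 < (-1) ^ j * ψ (τ j) := by
    have : n * (τ j - t₀) + α = j * π - π / 2 := by simp only [τ]; field_simp; ring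
    simp only [ψ, this, Real.sin_nat_mul_pi_sub, Real.sin_pi_div_two]
    have := abs_lt.1 (hbd (τ j))
    rcases neg_one_pow_eq_or ℝ j with h | h <;> rw [h] <;> linarith
  have hτ_sign (j : ℕ) : ψ (τ j) * ψ (τ (j + 1)) < 0 := by
    have := mul_pos (hψτ j) (hψτ (j + 1))
    rcases neg_one_pow_eq_or ℝ j with h | h <;> rw [pow_succ, h] at this <;> linarith
  have hτ_mono : StrictMono τ := fun i j hij => by
    have : (i : ℝ) < j := Nat.cast_lt.2 hij
    simp only [τ]
    gcongr
  have hτ₁ : t₀ < τ 1 := by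
    have : 0 < (π - π / 2 - α) / n := div_pos (by linarith [hα.2]) hn'
    simp only [τ, Nat.cast_one, one_mul]
    linarith
  have hτ_end : τ (2 * n) < t₀ + 2 * π := by
    have : (2 * n * π - π / 2 - α) / n < 2 * π := by
      rw [div_lt_iff₀ hn']
      linarith [hα.1]
    simp only [τ]
    push_cast
    linarith
  -- `ψ` changes sign along `t₁ < τ 1 < ⋯ < τ (2n)`: `2n` zeros besides `t₀`, all in a period
  obtain ⟨t₁, ⟨ht₀₁, ht₁τ⟩, hψt₁⟩ := hψ_der.exists_mem_Ioo_lt_of_pos (by linarith) hτ₁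
  set u : ℕ → ℝ := fun j => if j = 0 then t₁ else τ j
  have hu : StrictMono u := strictMono_nat_of_lt_succ fun j => by
    rcases j with _ | j
    · simpa [u] using ht₁τ
    · simpa [u] using hτ_mono (Nat.lt_succ_self (j + 1))
  have hsign : ∀ i < 2 * n, ψ (u i) * ψ (u (i + 1)) < 0 := fun i _ => by
    rcases i with _ | i
    · have := hψτ 1
      show ψ t₁ * ψ (τ 1) < 0
      nlinarith
    · simpa [u] using hτ_sign (i + 1)
  obtain ⟨S, hS_card, hS_sub, hS_zero⟩ :=
    exists_finset_zeros_of_sign_changes (continuous_of_mem_trigPolyDegreeLE hψ_mem) hu _ hsign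
  have hS_sub' : ↑S ⊆ Ioo t₁ (τ (2 * n)) := by simpa [u, hn] using hS_sub
  have ht₀S : t₀ ∉ S := fun h => by linarith [(hS_sub' h).1]
  have hψ_zero : ψ = 0 := by
    refine eq_zero_of_mem_trigPolyDegreeLE_of_card_lt hψ_mem (S := insert t₀ S) (a := t₀) ?_
      (by rw [card_insert_of_notMem ht₀S]; omega) ?_
    · intro s hs
      rcases Finset.mem_insert.1 hs with rfl | hs
      · exact ⟨le_rfl, by linarith [Real.pi_pos]⟩
      · exact ⟨by linarith [(hS_sub' hs).1], by linarith [(hS_sub' hs).2]⟩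
    · intro s hs
      rcases Finset.mem_insert.1 hs with rfl | hs
      exacts [hψ₀, hS_zero s hs]
  simpa [hψ_zero] using hψτ 1

open Filter Topology in
theorem le_mul_sqrt_of_hasDerivAt_of_mem_trigPolyDegreeLE {M t₀ f' : ℝ}
    (hf : f ∈ trigPolyDegreeLE n) (hbd : ∀ t, |f t| ≤ M) (hder : HasDerivAt f f' t₀) :
    f' ≤ n * √(M ^ 2 - f t₀ ^ 2) := by
  rcases eq_or_ne n 0 with rfl | hn
  · have hconst : f - (fun _ => f t₀) = 0 := by
      refine eq_zero_of_mem_trigPolyDegreeLE_of_card_lt (S := {t₀}) (a := t₀)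
        (sub_mem hf (const_mem_trigPolyDegreeLE_zero (f t₀))) ?_ (by simp) (by simp)
      simpa using Real.pi_pos
    have : f = fun _ => f t₀ := sub_eq_zero.1 hconst
    rw [this] at hder
    simp [hder.unique (hasDerivAt_const t₀ _)]
  -- the comparison needs a strict bound: use every `M' > M`, then let `M'` tend to `M`
  have hlt (M' : ℝ) (hM' : M < M') : f' ≤ n * √(M' ^ 2 - f t₀ ^ 2) := by
    have hM'₀ : 0 < M' := (abs_nonneg _).trans_lt ((hbd t₀).trans_lt hM')
    have hratio : |f t₀ / M'| < 1 := by
      rw [abs_div, abs_of_pos hM'₀, div_lt_one hM'₀]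
      exact (hbd t₀).trans_lt hM'
    have hα := le_mul_cos_of_hasDerivAt_of_eq_mul_sin hf hn (fun t => (hbd t).trans_lt hM')
      ⟨Real.neg_pi_div_two_lt_arcsin.2 (abs_lt.1 hratio).1,
        Real.arcsin_lt_pi_div_two.2 (abs_lt.1 hratio).2⟩
      (by rw [Real.sin_arcsin (abs_lt.1 hratio).1.le (abs_lt.1 hratio).2.le]; field_simp) hder
    have hsqrt : M' * √(1 - (f t₀ / M') ^ 2) = √(M' ^ 2 - f t₀ ^ 2) := by
      rw [show M' ^ 2 - f t₀ ^ 2 = M' ^ 2 * (1 - (f t₀ / M') ^ 2) by field_simp,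
        Real.sqrt_mul (sq_nonneg M'), Real.sqrt_sq hM'₀.le]
    rwa [Real.cos_arcsin, mul_assoc, hsqrt] at hα
  refine ge_of_tendsto ?_ (eventually_nhdsWithin_of_forall (s := Ioi M) (a := M) hlt)
  exact ((continuous_const.mul (by fun_prop)).tendsto M).mono_left nhdsWithin_le_nhds

theorem abs_le_mul_sqrt_of_hasDerivAt_of_mem_trigPolyDegreeLE {M t₀ f' : ℝ}
    (hf : f ∈ trigPolyDegreeLE n) (hbd : ∀ t, |f t| ≤ M) (hder : HasDerivAt f f' t₀) :
    |f'| ≤ n * √(M ^ 2 - f t₀ ^ 2) := by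
  refine abs_le.2 ⟨?_, le_mul_sqrt_of_hasDerivAt_of_mem_trigPolyDegreeLE hf hbd hder⟩
  have := le_mul_sqrt_of_hasDerivAt_of_mem_trigPolyDegreeLE (neg_mem hf)
    (fun t => by simpa using hbd t) hder.neg
  simp only [Pi.neg_apply, neg_sq] at this
  linarith

end TrigPoly

theorem multilinearMap_comp_mem_trigPolyDegreeLE {X ι : Type*} [AddCommGroup X] [Module ℝ X]
    [Fintype ι] {k : ℕ} (L : MultilinearMap ℝ (fun _ : Fin k => X) ℝ) {c : ι → ℝ → ℝ}
    (hc : ∀ j, c j ∈ trigPolyDegreeLE 1) (w : ι → X) :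
    (fun t => L fun _ => ∑ j, c j t • w j) ∈ trigPolyDegreeLE k := by
  classical
  have hexpand : (fun t => L fun _ => ∑ j, c j t • w j) =
      ∑ r : Fin k → ι, L (fun i => w (r i)) • ∏ i, c (r i) := by
    funext t
    simp [L.map_sum, L.map_smul_univ, Finset.prod_apply, mul_comm]
  rw [hexpand]
  refine sum_mem fun r _ => Submodule.smul_mem _ _ ?_
  simpa using prod_mem_trigPolyDegreeLE univ fun i _ => hc (r i)

theorem IsPolyDegLE.differentiable {X : Type*} [NormedAddCommGroup X] [NormedSpace ℝ X] {n : ℕ}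
    {p : X → ℝ} (hp : IsPolyDegLE n p) : Differentiable ℝ p := by
  obtain ⟨L, hL⟩ := hp
  rw [funext hL]
  exact Differentiable.fun_sum fun k _ =>
    ((L k).contDiff.comp (contDiff_pi.2 fun _ => contDiff_id)).differentiable one_ne_zero

theorem IsPolyDegLE.comp_ellipse_mem_trigPolyDegreeLE {X : Type*} [NormedAddCommGroup X]
    [NormedSpace ℝ X] {n : ℕ} {p : X → ℝ} (hp : IsPolyDegLE n p) (u v w : X) :
    (fun t => p (Real.cos t • u + Real.sin t • v + w)) ∈ trigPolyDegreeLE n := by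
  obtain ⟨L, hL⟩ := hp
  set c : Fin 3 → ℝ → ℝ := ![Real.cos, Real.sin, 1]
  have hc : ∀ j, c j ∈ trigPolyDegreeLE 1 := by
    refine Fin.forall_fin_succ.2 ⟨cos_mem_trigPolyDegreeLE_one, Fin.forall_fin_succ.2
      ⟨sin_mem_trigPolyDegreeLE_one, Fin.forall_fin_one.2 ?_⟩⟩
    exact trigPolyDegreeLE_mono zero_le_one (const_mem_trigPolyDegreeLE_zero 1)
  have hcurve : (fun t => p (Real.cos t • u + Real.sin t • v + w)) =
      ∑ k, fun t => L k fun _ => ∑ j, c j t • ![u, v, w] j := by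
    funext t
    simp [c, hL, Fin.sum_univ_three]
  rw [hcurve]
  exact sum_mem fun k _ => trigPolyDegreeLE_mono (Nat.lt_succ_iff.1 k.2)
    (multilinearMap_comp_mem_trigPolyDegreeLE (L k).toMultilinearMap hc _)

theorem inscribed_ellipse_lemma_general {X : Type*} [NormedAddCommGroup X] [NormedSpace ℝ X]
    (K : Set X) (x a y : X) (b : ℝ) (hb : 0 < b)
    (hellipse : ∀ t : ℝ, (Real.cos t) • a + (b * Real.sin t) • y + x - a ∈ K)
    (n : ℕ) (p : X → ℝ) (hp : IsPolyDegLE n p)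
    (hbdd : BddAbove ((fun z => |p z|) '' K)) :
    |deriv (fun t : ℝ => p (x + t • y)) 0| ≤
      ((n : ℝ) / b) * Real.sqrt ((sSup ((fun z => |p z|) '' K)) ^ 2 - (p x) ^ 2) := by
  have hp' := (hp.differentiable x).hasFDerivAt
  have hline : HasDerivAt (fun t : ℝ => p (x + t • y)) (fderiv ℝ p x y) 0 :=
    (hp'.comp_hasDerivAt_of_eq 0 (((hasDerivAt_id 0).smul_const y).const_add x)
      (by simp)).congr_deriv (by simp)
  have hellipse_der : HasDerivAt (fun t => p (Real.cos t • a + Real.sin t • (b • y) + (x - a)))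
      (b * fderiv ℝ p x y) 0 := by
    refine (hp'.comp_hasDerivAt_of_eq 0 ((((Real.hasDerivAt_cos 0).smul_const a).add
      ((Real.hasDerivAt_sin 0).smul_const (b • y))).add_const (x - a)) (by simp)).congr_deriv ?_
    simp
  have hbound (t : ℝ) :
      |p (Real.cos t • a + Real.sin t • (b • y) + (x - a))| ≤ sSup ((fun z => |p z|) '' K) := by
    refine le_csSup hbdd ⟨_, ?_, rfl⟩
    convert hellipse t using 1
    rw [smul_smul, mul_comm]
    abel
  have := abs_le_mul_sqrt_of_hasDerivAt_of_mem_trigPolyDegreeLE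
    (hp.comp_ellipse_mem_trigPolyDegreeLE a (b • y) (x - a)) hbound hellipse_der
  simp only [Real.cos_zero, Real.sin_zero, one_smul, zero_smul, add_zero, add_sub_cancel,
    abs_mul, abs_of_pos hb] at this
  rw [hline.deriv, div_mul_eq_mul_div, le_div_iff₀ hb]
  linarith

/-- Inscribed Ellipse Lemma (Sarantopoulos): if the ellipse
`t ↦ (cos t)·a + b(sin t)·y + x - a` lies in `K ∋ x`, then every polynomial `p` of degree
at most `n` satisfies `|⟨Dp(x),y⟩| ≤ (n/b)·√(‖p‖_K² - p(x)²)`. -/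
theorem inscribed_ellipse_lemma {X : Type*} [NormedAddCommGroup X] [NormedSpace ℝ X]
    (K : Set X) (x a y : X) (b : ℝ) (hb : 0 < b) (hx : x ∈ K)
    (hellipse : ∀ t : ℝ, (Real.cos t) • a + (b * Real.sin t) • y + x - a ∈ K)
    (n : ℕ) (p : X → ℝ) (hp : IsPolyDegLE n p)
    (hbdd : BddAbove ((fun z => |p z|) '' K)) :
    |deriv (fun t : ℝ => p (x + t • y)) 0| ≤
      ((n : ℝ) / b) * Real.sqrt ((sSup ((fun z => |p z|) '' K)) ^ 2 - (p x) ^ 2) :=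
  inscribed_ellipse_lemma_general K x a y b hb hellipse n p hp hbdd
end

section
/- For a convex body K in a normed space X and any exterior point x ∉ K, the Chebyshev-type extremal value C_n(K,x) := sup{ p(x) : p ∈ 𝒫_n, ‖p‖_K ≤ 1 } equals T_n(α(K,x)), where T_n is the n-th Chebyshev polynomial and α(K,x) is the generalized Minkowski functional; moreover the supremum is attained by a composition of T_n with an affine functional normalized by the width of K in a suitable direction. -/
/-!
Write `K^λ` for the set of points `y` with `|u y - c(u)| ≤ λ w(u)/2` for all unit functionals
`u`, where `c(u)` and `w(u)` are the midline and the width of `K` in direction `u`. For `λ ≥ 1`,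
Hahn–Banach shows that `K^λ` is the closure of the set of points `((1+λ)/2) a + ((1-λ)/2) b`
with `a, b ∈ K`. On the line through `a` and `b`, a polynomial bounded by `1` on `K` becomes a
one-variable polynomial bounded by `1` on `[-1, 1]`, hence it is at most `Tₙ(λ)` at such a point.
So `Cₙ(K,x) ≤ Tₙ(α)` for `α = α(K,x)`.

Conversely, `α > 1` because `K` is closed, and `x` lies on the boundary of `K^α`: from an
interior point, `x` could be pulled towards `K` into a strictly thinner layer. A functional `v`
supporting `K^α` at `x` is also maximised at `x` over the points above, so `x` lies on the edge of
the `α`-dilated `v`-layer. The Chebyshev polynomial of the affine map that sends the `v`-layer of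
`K` onto `[-1, 1]` then takes the value `Tₙ(α)` at `x`.
-/

open scoped BigOperators

/-- Support functional `h(K,u) = sup_K u`. -/
noncomputable def suppFn {X : Type*} [NormedAddCommGroup X] [NormedSpace ℝ X]
    (K : Set X) (u : X →L[ℝ] ℝ) : ℝ :=
  sSup ((fun z => u z) '' K)

/-- The generalized Minkowski functional `α(K,x)`: the infimum of dilation factors `λ ≥ 0`
such that `x` belongs to every `λ`-dilated supporting layer of `K`. -/
noncomputable def genMinkowski {X : Type*} [NormedAddCommGroup X] [NormedSpace ℝ X]
    (K : Set X) (x : X) : ℝ :=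
  sInf {l : ℝ | 0 ≤ l ∧ ∀ u : X →L[ℝ] ℝ, ‖u‖ = 1 →
    |u x - (suppFn K u - suppFn K (-u)) / 2| ≤ l * (suppFn K u + suppFn K (-u)) / 2}

section

open Polynomial Set Pointwise Filter Topology

variable {E : Type*} [NormedAddCommGroup E] [NormedSpace ℝ E]

namespace IsPolyDegLE

variable {n : ℕ} {p : E → ℝ}

theorem continuous (h : IsPolyDegLE n p) : Continuous p := by
  obtain ⟨L, hL⟩ := h
  rw [funext hL]
  fun_prop

theorem exists_eval_eq_add_smul (h : IsPolyDegLE n p) (a d : E) :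
    ∃ q : ℝ[X], q.degree ≤ n ∧ ∀ t : ℝ, q.eval t = p (a + t • d) := by
  classical
  obtain ⟨L, hL⟩ := h
  -- Expanding `L k (a + t • d, …)` over the slots `S` holding `t • d` gives `t ^ #S` times a
  -- constant.
  refine ⟨∑ k : Fin (n + 1), ∑ S : Finset (Fin k),
    C (L k (S.piecewise (fun _ => d) fun _ => a)) * X ^ S.card, ?_, fun t => ?_⟩
  · refine (mem_degreeLE.1 <| Submodule.sum_mem _ fun k _ => Submodule.sum_mem _ fun S _ =>
      mem_degreeLE.2 <| (degree_C_mul_X_pow_le _ _).trans ?_)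
    exact_mod_cast (S.card_le_univ.trans_eq (Fintype.card_fin k)).trans (Nat.lt_succ_iff.1 k.2)
  · rw [hL, eval_finsetSum]
    refine Finset.sum_congr rfl fun k _ => ?_
    have hsplit : (fun _ : Fin k => a + t • d) = (fun _ => t • d) + fun _ => a := by
      ext; simp [add_comm]
    rw [hsplit, ← ContinuousMultilinearMap.coe_coe, MultilinearMap.map_add_univ, eval_finsetSum]
    refine Finset.sum_congr rfl fun S _ => ?_
    have hpw : S.piecewise (fun _ => t • d) (fun _ => a) =
        S.piecewise (fun i => t • S.piecewise (fun _ => d) (fun _ => a) i)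
          (S.piecewise (fun _ => d) fun _ => a) := by
      ext i; by_cases hi : i ∈ S <;> simp [hi]
    rw [hpw, MultilinearMap.map_piecewise_smul]
    simp only [Finset.prod_const, smul_eq_mul, eval_mul, eval_C, eval_pow, eval_X,
      ContinuousMultilinearMap.coe_coe]
    ring

theorem le_eval_T (hp : IsPolyDegLE n p) (a d : E)
    (hpd : ∀ t ∈ Icc (-1 : ℝ) 1, |p (a + t • d)| ≤ 1) {s : ℝ} (hs : 1 ≤ s) :
    p (a + s • d) ≤ (Chebyshev.T ℝ n).eval s := by
  obtain ⟨q, hq, hqp⟩ := hp.exists_eval_eq_add_smul a d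
  simpa [hqp] using Chebyshev.eval_iterate_derivative_le_of_forall_abs_le_one (k := 0) hs hq
    fun t ht => (hqp t).symm ▸ hpd t ht

end IsPolyDegLE

theorem isPolyDegLE_eval_apply {n : ℕ} {Q : ℝ[X]} (hQ : Q.natDegree ≤ n)
    (v : E →L[ℝ] ℝ) : IsPolyDegLE n fun z => Q.eval (v z) := by
  refine ⟨fun k => Q.coeff k •
    (ContinuousMultilinearMap.mkPiAlgebra ℝ (Fin k) ℝ).compContinuousLinearMap fun _ => v,
    fun z => ?_⟩
  dsimp only
  rw [eval_eq_sum_range' (Nat.lt_succ_of_le hQ), ← Fin.sum_univ_eq_sum_range]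
  simp

theorem isPolyDegLE_eval_apply_add {n : ℕ} {Q : ℝ[X]} (hQ : Q.natDegree ≤ n)
    (v : E →L[ℝ] ℝ) (c : ℝ) : IsPolyDegLE n fun z => Q.eval (v z + c) := by
  have hdeg : (Q.comp (X + C c)).natDegree ≤ n := by
    rwa [natDegree_comp, natDegree_X_add_C, mul_one]
  simpa using isPolyDegLE_eval_apply hdeg v

section SupportFunction

variable {s t : Set E} {u : E →L[ℝ] ℝ}

theorem Bornology.IsBounded.bddAbove_image (hs : Bornology.IsBounded s) (u : E →L[ℝ] ℝ) :
    BddAbove (u '' s) :=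
  (u.lipschitz.isBounded_image hs).bddAbove

theorem le_suppFn (hs : Bornology.IsBounded s) {z : E} (hz : z ∈ s) : u z ≤ suppFn s u :=
  le_csSup (hs.bddAbove_image u) (mem_image_of_mem _ hz)

theorem suppFn_le (hs : s.Nonempty) {a : ℝ} (h : ∀ z ∈ s, u z ≤ a) : suppFn s u ≤ a :=
  csSup_le (hs.image _) (forall_mem_image.2 h)

theorem suppFn_smul {c : ℝ} (hc : 0 ≤ c) : suppFn s (c • u) = c * suppFn s u := by
  rw [suppFn, suppFn, ← smul_eq_mul, ← Real.sSup_smul_of_nonneg hc, ← image_smul, image_image]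
  rfl

theorem suppFn_smul_set (c : ℝ) : suppFn (c • s) u = suppFn s (c • u) := by
  rw [suppFn, suppFn, ← image_smul, image_image]
  simp

theorem suppFn_add (hs : s.Nonempty) (hs' : Bornology.IsBounded s) (ht : t.Nonempty)
    (ht' : Bornology.IsBounded t) : suppFn (s + t) u = suppFn s u + suppFn t u := by
  rw [suppFn, suppFn, suppFn, show (fun z => u z) = ⇑u from rfl, image_add,
    csSup_add (hs.image _) (hs'.bddAbove_image u) (ht.image _) (ht'.bddAbove_image u)]

theorem suppFn_add_suppFn_neg_nonneg (hs : Bornology.IsBounded s) {z : E} (hz : z ∈ s) :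
    0 ≤ suppFn s u + suppFn s (-u) := by
  have h₁ := le_suppFn (u := u) hs hz
  have h₂ := le_suppFn (u := -u) hs hz
  simp only [neg_apply] at h₂
  linarith

end SupportFunction

theorem ContinuousLinearMap.exists_norm_eq_one_eq_smul {f : E →L[ℝ] ℝ} (hf : f ≠ 0) :
    ∃ v : E →L[ℝ] ℝ, ‖v‖ = 1 ∧ ∃ c : ℝ, 0 < c ∧ f = c • v :=
  ⟨‖f‖⁻¹ • f, norm_smul_inv_norm hf, ‖f‖, norm_pos_iff.2 hf,
    by rw [smul_smul, mul_inv_cancel₀ (norm_ne_zero_iff.2 hf), one_smul]⟩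

theorem mem_closure_of_forall_le_suppFn {M : Set E} (hM : Convex ℝ M) (hne : M.Nonempty)
    {x : E} (h : ∀ v : E →L[ℝ] ℝ, ‖v‖ = 1 → v x ≤ suppFn M v) :
    x ∈ closure M := by
  by_contra hx
  obtain ⟨f, a, hfM, hfx⟩ := geometric_hahn_banach_closed_point hM.closure isClosed_closure hx
  have hf : f ≠ 0 := by
    rintro rfl
    obtain ⟨z, hz⟩ := hne
    exact (hfM z (subset_closure hz)).not_ge hfx.le
  obtain ⟨v, hv, c, hc, rfl⟩ := f.exists_norm_eq_one_eq_smul hf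
  have hvM : suppFn M v ≤ a / c := suppFn_le hne fun y hy =>
    (le_div_iff₀' hc).2 (hfM y (subset_closure hy)).le
  have hvx : a / c < v x := (div_lt_iff₀' hc).2 hfx
  exact (h v hv).not_gt (hvM.trans_lt hvx)

theorem exists_forall_le_of_notMem_interior {M : Set E} (hM : Convex ℝ M)
    (hint : (interior M).Nonempty) {x : E} (hx : x ∉ interior M) :
    ∃ v : E →L[ℝ] ℝ, ‖v‖ = 1 ∧ ∀ y ∈ M, v y ≤ v x := by
  obtain ⟨f, a, hf, hfM, hfx⟩ := geometric_hahn_banach_of_nonempty_interior hM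
    (convex_singleton x) (disjoint_singleton_right.2 hx) hint (singleton_nonempty x)
  obtain ⟨v, hv, c, hc, rfl⟩ := f.exists_norm_eq_one_eq_smul hf
  exact ⟨v, hv, fun y hy => le_of_mul_le_mul_left ((hfM y hy).trans (hfx x rfl)) hc⟩

theorem eventually_add_smul_mem {S : Set E} {z d : E} {t₀ : ℝ}
    (h : z + t₀ • d ∈ interior S) : ∀ᶠ t in 𝓝 t₀, z + t • d ∈ S :=
  (by fun_prop : Continuous fun t : ℝ => z + t • d).continuousAt.preimage_mem_nhds
    (mem_interior_iff_mem_nhds.1 h)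

theorem suppFn_add_suppFn_neg_pos {K : Set E} (hbd : Bornology.IsBounded K) {z : E}
    (hz : z ∈ interior K) {u : E →L[ℝ] ℝ} (hu : u ≠ 0) :
    0 < suppFn K u + suppFn K (-u) := by
  obtain ⟨y, hy⟩ := DFunLike.ne_iff.1 hu
  have hz' : ∀ d : E, z + (0 : ℝ) • d ∈ interior K := fun d => by simpa using hz
  obtain ⟨t, ⟨hplus, hminus⟩, ht⟩ := ((eventually_add_smul_mem (hz' y)).and
    (eventually_add_smul_mem (hz' (-y)))).filter_mono nhdsWithin_le_nhds |>.and
    self_mem_nhdsWithin |>.exists (f := 𝓝[>] (0 : ℝ))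
  have h₁ := le_suppFn (u := u) hbd hplus
  have h₂ := le_suppFn (u := u) hbd hminus
  have h₃ := le_suppFn (u := -u) hbd hplus
  have h₄ := le_suppFn (u := -u) hbd hminus
  simp only [map_add, map_smul, map_neg, neg_apply, smul_eq_mul] at h₁ h₂ h₃ h₄
  rcases (show u y ≠ 0 from hy).lt_or_gt with hneg | hpos
  · nlinarith [mul_neg_of_pos_of_neg (mem_Ioi.1 ht) hneg]
  · nlinarith [mul_pos (mem_Ioi.1 ht) hpos]

/-- The affine coordinate sending the `v`-layer of `K` onto `[-1, 1]`. -/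
noncomputable def layerCoord (K : Set E) (v : E →L[ℝ] ℝ) (z : E) : ℝ :=
  (2 * v z - suppFn K v + suppFn K (-v)) / (suppFn K v + suppFn K (-v))

theorem isPolyDegLE_eval_layerCoord (K : Set E) (v : E →L[ℝ] ℝ) {n : ℕ} {Q : ℝ[X]}
    (hQ : Q.natDegree ≤ n) : IsPolyDegLE n fun z => Q.eval (layerCoord K v z) := by
  convert isPolyDegLE_eval_apply_add hQ ((2 / (suppFn K v + suppFn K (-v))) • v)
    ((suppFn K (-v) - suppFn K v) / (suppFn K v + suppFn K (-v))) using 3 with z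
  rw [layerCoord, smul_apply, smul_eq_mul]
  ring

theorem abs_layerCoord_le_one {K : Set E} (hbd : Bornology.IsBounded K) {z₀ : E}
    (hz₀ : z₀ ∈ interior K) {v : E →L[ℝ] ℝ} (hv : v ≠ 0) {z : E} (hz : z ∈ K) :
    |layerCoord K v z| ≤ 1 := by
  have hw := suppFn_add_suppFn_neg_pos hbd hz₀ hv
  have h₁ := le_suppFn (u := v) hbd hz
  have h₂ := le_suppFn (u := -v) hbd hz
  rw [neg_apply] at h₂
  rw [layerCoord, abs_div, abs_of_pos hw, div_le_one hw, abs_le]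
  constructor <;> linarith

section DilatedLayers

variable {K : Set E}

/-- The set `K^λ` of the paper, with `l` for `λ`. -/
def dilatedLayers (K : Set E) (l : ℝ) : Set E :=
  {y | ∀ u : E →L[ℝ] ℝ, ‖u‖ = 1 →
    |u y - (suppFn K u - suppFn K (-u)) / 2| ≤ l * (suppFn K u + suppFn K (-u)) / 2}

def dilatedBody (K : Set E) (l : ℝ) : Set E := ((1 + l) / 2) • K + ((1 - l) / 2) • K

theorem Convex.dilatedBody (hconv : Convex ℝ K) (l : ℝ) : Convex ℝ (dilatedBody K l) :=
  (hconv.smul _).add (hconv.smul _)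

theorem Set.Nonempty.dilatedBody (hK : K.Nonempty) (l : ℝ) : (dilatedBody K l).Nonempty :=
  hK.smul_set.add hK.smul_set

theorem smul_add_smul_mem_dilatedLayers {y z : E} {a b l m : ℝ} (hy : y ∈ dilatedLayers K l)
    (hz : z ∈ dilatedLayers K m) (hab : a + b = 1) :
    a • y + b • z ∈ dilatedLayers K (|a| * l + |b| * m) := by
  intro u hu
  set c := (suppFn K u - suppFn K (-u)) / 2
  set w := suppFn K u + suppFn K (-u)
  calc |u (a • y + b • z) - c| = |a * (u y - c) + b * (u z - c)| := by
        simp only [map_add, map_smul, smul_eq_mul]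
        congr 1
        linear_combination c * hab
    _ ≤ |a| * |u y - c| + |b| * |u z - c| := by
        rw [← abs_mul, ← abs_mul]; exact abs_add_le _ _
    _ ≤ |a| * (l * w / 2) + |b| * (m * w / 2) := by gcongr; exacts [hy u hu, hz u hu]
    _ = (|a| * l + |b| * m) * w / 2 := by ring

theorem convex_dilatedLayers (K : Set E) (l : ℝ) : Convex ℝ (dilatedLayers K l) :=
  fun y hy z hz a b ha hb hab => by
    simpa [abs_of_nonneg ha, abs_of_nonneg hb, ← add_mul, hab] using
      smul_add_smul_mem_dilatedLayers hy hz hab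

theorem mem_dilatedLayers_of_add_smul_sub_mem {x z : E} {t l : ℝ} (hz : z ∈ dilatedLayers K 1)
    (ht : 0 < t) (h : z + t • (x - z) ∈ dilatedLayers K l) :
    x ∈ dilatedLayers K (t⁻¹ * l + |1 - t⁻¹|) := by
  have hx : x = t⁻¹ • (z + t • (x - z)) + (1 - t⁻¹) • z := by
    rw [smul_add, smul_smul, inv_mul_cancel₀ ht.ne', one_smul]; module
  rw [hx]
  simpa [abs_of_pos ht] using
    smul_add_smul_mem_dilatedLayers h hz (by ring : t⁻¹ + (1 - t⁻¹) = 1)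

theorem subset_dilatedLayers_one (hbd : Bornology.IsBounded K) : K ⊆ dilatedLayers K 1 := by
  intro z hz u _
  have h₁ := le_suppFn (u := u) hbd hz
  have h₂ := le_suppFn (u := -u) hbd hz
  rw [neg_apply] at h₂
  exact abs_le.2 ⟨by linarith, by linarith⟩

theorem dilatedLayers_mono (hbd : Bornology.IsBounded K) (hK : K.Nonempty) :
    Monotone (dilatedLayers K) := by
  intro l m hlm y hy u hu
  obtain ⟨z, hz⟩ := hK
  exact (hy u hu).trans (by gcongr; exact suppFn_add_suppFn_neg_nonneg hbd hz)

theorem dilatedBody_subset_dilatedLayers (hbd : Bornology.IsBounded K) {l : ℝ} (hl : 1 ≤ l) :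
    dilatedBody K l ⊆ dilatedLayers K l := by
  rintro _ ⟨_, ⟨a, ha, rfl⟩, _, ⟨b, hb, rfl⟩, rfl⟩
  have := smul_add_smul_mem_dilatedLayers (subset_dilatedLayers_one hbd ha)
    (subset_dilatedLayers_one hbd hb) (by ring : (1 + l) / 2 + (1 - l) / 2 = 1)
  rwa [abs_of_nonneg (by linarith), abs_of_nonpos (by linarith), show
    (1 + l) / 2 * 1 + -((1 - l) / 2) * 1 = l by ring] at this

theorem suppFn_dilatedBody (hbd : Bornology.IsBounded K) (hK : K.Nonempty) {l : ℝ} (hl : 1 ≤ l)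
    (u : E →L[ℝ] ℝ) :
    suppFn (dilatedBody K l) u =
      (suppFn K u - suppFn K (-u)) / 2 + l * (suppFn K u + suppFn K (-u)) / 2 := by
  rw [dilatedBody, suppFn_add hK.smul_set (hbd.smul₀ _) hK.smul_set (hbd.smul₀ _),
    suppFn_smul_set, suppFn_smul_set, suppFn_smul (by linarith),
    show ((1 - l) / 2) • u = ((l - 1) / 2) • -u by module, suppFn_smul (by linarith)]
  ring

theorem dilatedLayers_subset_closure (hconv : Convex ℝ K) (hbd : Bornology.IsBounded K)
    (hK : K.Nonempty) {l : ℝ} (hl : 1 ≤ l) : dilatedLayers K l ⊆ closure (dilatedBody K l) :=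
  fun y hy => mem_closure_of_forall_le_suppFn (hconv.dilatedBody l) (hK.dilatedBody l)
    fun v hv => by
      rw [suppFn_dilatedBody hbd hK hl]
      linarith [(abs_le.1 (hy v hv)).2]

theorem dilatedLayers_one_subset_closure (hconv : Convex ℝ K) (hK : K.Nonempty) :
    dilatedLayers K 1 ⊆ closure K :=
  fun y hy => mem_closure_of_forall_le_suppFn hconv hK fun v hv => by
    linarith [(abs_le.1 (hy v hv)).2]

theorem exists_mem_dilatedLayers (hbd : Bornology.IsBounded K) {z : E} (hz : z ∈ interior K)
    (x : E) : ∃ l, 0 ≤ l ∧ x ∈ dilatedLayers K l := by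
  obtain ⟨t, hzt, ht⟩ := ((eventually_add_smul_mem (t₀ := 0) (d := x - z) (by simpa using hz)
    ).filter_mono nhdsWithin_le_nhds).and self_mem_nhdsWithin |>.exists (f := 𝓝[>] (0 : ℝ))
  exact ⟨_, by positivity, mem_dilatedLayers_of_add_smul_sub_mem
    (subset_dilatedLayers_one hbd (interior_subset hz)) ht (subset_dilatedLayers_one hbd hzt)⟩

theorem mem_dilatedLayers_genMinkowski (hbd : Bornology.IsBounded K) {z : E}
    (hz : z ∈ interior K) (x : E) : x ∈ dilatedLayers K (genMinkowski K x) := by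
  have hclosed : IsClosed {l : ℝ | x ∈ dilatedLayers K l} := by
    simp only [dilatedLayers, mem_ofPred_eq]
    simp only [ofPred_forall]
    exact isClosed_iInter fun u => isClosed_iInter fun _ =>
      isClosed_le continuous_const (by fun_prop)
  exact ((isClosed_Ici.inter hclosed).csInf_mem (exists_mem_dilatedLayers hbd hz x)
    ⟨0, fun l hl => hl.1⟩).2

theorem one_lt_genMinkowski (hconv : Convex ℝ K) (hcl : IsClosed K)
    (hbd : Bornology.IsBounded K) {z : E} (hz : z ∈ interior K) {x : E} (hx : x ∉ K) :
    1 < genMinkowski K x := by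
  by_contra! h
  have hK : K.Nonempty := ⟨z, interior_subset hz⟩
  exact hx <| hcl.closure_subset <| dilatedLayers_one_subset_closure hconv hK <|
    dilatedLayers_mono hbd hK h (mem_dilatedLayers_genMinkowski hbd hz x)

theorem notMem_interior_dilatedLayers_genMinkowski (hbd : Bornology.IsBounded K) {z x : E}
    (hz : z ∈ K) (hα : 1 < genMinkowski K x) :
    x ∉ interior (dilatedLayers K (genMinkowski K x)) := by
  set α := genMinkowski K x
  intro hx
  obtain ⟨s, hs, hs1⟩ := ((eventually_add_smul_mem (t₀ := 1) (z := z) (d := x - z)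
    (by simpa using hx)).filter_mono nhdsWithin_le_nhds).and self_mem_nhdsWithin |>.exists
    (f := 𝓝[>] (1 : ℝ))
  have hs0 : 0 < s := zero_lt_one.trans hs1
  have hinv : s⁻¹ < 1 := inv_lt_one_of_one_lt₀ hs1
  have hmem := mem_dilatedLayers_of_add_smul_sub_mem (subset_dilatedLayers_one hbd hz) hs0 hs
  rw [abs_of_pos (by linarith)] at hmem
  have hle : α ≤ s⁻¹ * α + (1 - s⁻¹) :=
    csInf_le ⟨0, fun l hl => hl.1⟩ ⟨by positivity, hmem⟩
  nlinarith [mul_pos (sub_pos.2 hα) (sub_pos.2 hinv)]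

theorem exists_norm_eq_one_layerCoord_eq_genMinkowski (hbd : Bornology.IsBounded K) {z : E}
    (hz : z ∈ interior K) {x : E} (hα : 1 < genMinkowski K x) :
    ∃ v : E →L[ℝ] ℝ, ‖v‖ = 1 ∧ layerCoord K v x = genMinkowski K x := by
  have hK : K.Nonempty := ⟨z, interior_subset hz⟩
  have hKα : K ⊆ dilatedLayers K (genMinkowski K x) :=
    (subset_dilatedLayers_one hbd).trans (dilatedLayers_mono hbd hK hα.le)
  obtain ⟨v, hv, hvx⟩ := exists_forall_le_of_notMem_interior (convex_dilatedLayers K _)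
    ⟨z, interior_mono hKα hz⟩
    (notMem_interior_dilatedLayers_genMinkowski hbd (interior_subset hz) hα)
  have hupper := (abs_le.1 (mem_dilatedLayers_genMinkowski hbd hz x v hv)).2
  have hlower := suppFn_le (hK.dilatedBody _) fun y hy =>
    hvx y (dilatedBody_subset_dilatedLayers hbd hα.le hy)
  rw [suppFn_dilatedBody hbd hK hα.le] at hlower
  refine ⟨v, hv, (div_eq_iff (suppFn_add_suppFn_neg_pos hbd hz ?_).ne').2 (by linarith)⟩
  exact norm_ne_zero_iff.1 (hv ▸ one_ne_zero)

end DilatedLayers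

theorem IsPolyDegLE.le_eval_T_of_mem_dilatedLayers {K : Set E} (hconv : Convex ℝ K)
    (hbd : Bornology.IsBounded K) (hK : K.Nonempty) {n : ℕ} {p : E → ℝ} (hp : IsPolyDegLE n p)
    (hpK : ∀ z ∈ K, |p z| ≤ 1) {l : ℝ} (hl : 1 ≤ l) {y : E}
    (hy : y ∈ dilatedLayers K l) :
    p y ≤ (Chebyshev.T ℝ n).eval l := by
  refine closure_minimal ?_ (isClosed_le hp.continuous continuous_const)
    (dilatedLayers_subset_closure hconv hbd hK hl hy)
  rintro _ ⟨_, ⟨a, ha, rfl⟩, _, ⟨b, hb, rfl⟩, rfl⟩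
  have hline : ∀ t : ℝ, ((1 + t) / 2) • a + ((1 - t) / 2) • b =
      (1 / 2 : ℝ) • (a + b) + t • ((1 / 2 : ℝ) • (a - b)) := fun t => by module
  change p (((1 + l) / 2) • a + ((1 - l) / 2) • b) ≤ _
  rw [hline]
  exact hp.le_eval_T _ _ (fun t ht => hline t ▸ hpK _ (hconv ha hb (by linarith [ht.1])
    (by linarith [ht.2]) (by ring))) hl

end

theorem chebyshev_convex_body_general {X : Type*} [NormedAddCommGroup X] [NormedSpace ℝ X]
    (K : Set X) (hconv : Convex ℝ K) (hcl : IsClosed K) (hbd : Bornology.IsBounded K)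
    (hint : (interior K).Nonempty) (x : X) (hx : x ∉ K) (n : ℕ) :
    sSup {y : ℝ | ∃ p : X → ℝ, IsPolyDegLE n p ∧ (∀ z ∈ K, |p z| ≤ 1) ∧ y = p x} =
        (Polynomial.Chebyshev.T ℝ n).eval (genMinkowski K x) ∧
      ∃ v : X →L[ℝ] ℝ, ‖v‖ = 1 ∧
        IsPolyDegLE n (fun z => (Polynomial.Chebyshev.T ℝ n).eval
          ((2 * v z - suppFn K v + suppFn K (-v)) / (suppFn K v + suppFn K (-v)))) ∧
        (∀ z ∈ K, |(Polynomial.Chebyshev.T ℝ n).eval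
          ((2 * v z - suppFn K v + suppFn K (-v)) / (suppFn K v + suppFn K (-v)))| ≤ 1) ∧
        (Polynomial.Chebyshev.T ℝ n).eval
            ((2 * v x - suppFn K v + suppFn K (-v)) / (suppFn K v + suppFn K (-v))) =
          (Polynomial.Chebyshev.T ℝ n).eval (genMinkowski K x) := by
  obtain ⟨z₀, hz₀⟩ := hint
  have hα := one_lt_genMinkowski hconv hcl hbd hz₀ hx
  obtain ⟨v, hv, hvx⟩ := exists_norm_eq_one_layerCoord_eq_genMinkowski hbd hz₀ hα
  have hP : IsPolyDegLE n fun z => (Polynomial.Chebyshev.T ℝ n).eval (layerCoord K v z) :=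
    isPolyDegLE_eval_layerCoord K v (by simp [Polynomial.Chebyshev.natDegree_T])
  have hPK : ∀ z ∈ K, |(Polynomial.Chebyshev.T ℝ n).eval (layerCoord K v z)| ≤ 1 :=
    fun z hz => Polynomial.Chebyshev.abs_eval_T_real_le_one n
      (abs_layerCoord_le_one hbd hz₀ (norm_ne_zero_iff.1 (hv ▸ one_ne_zero)) hz)
  have hPx := congrArg (Polynomial.Chebyshev.T ℝ n).eval hvx
  refine ⟨IsGreatest.csSup_eq ⟨⟨_, hP, hPK, hPx.symm⟩, ?_⟩, v, hv, hP, hPK, hPx⟩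
  rintro _ ⟨p, hp, hpK, rfl⟩
  exact hp.le_eval_T_of_mem_dilatedLayers hconv hbd ⟨z₀, interior_subset hz₀⟩ hpK hα.le
    (mem_dilatedLayers_genMinkowski hbd hz₀ x)

/-- Révész–Sarantopoulos Chebyshev theorem: for a convex body `K` and `x ∉ K`,
`Cₙ(K,x) = sup { p(x) : deg p ≤ n, ‖p‖_K ≤ 1 } = Tₙ(α(K,x))`, and the supremum is
attained by `z ↦ Tₙ((2⟨v,z⟩ - h(K,v) + h(K,-v))/w(K,v))` for a suitable unit functional
`v`. -/
theorem chebyshev_convex_body {X : Type*} [NormedAddCommGroup X] [NormedSpace ℝ X]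
    (K : Set X) (hconv : Convex ℝ K) (hcl : IsClosed K) (hbd : Bornology.IsBounded K)
    (hint : (interior K).Nonempty) (x : X) (hx : x ∉ K) (n : ℕ) (hn : 1 ≤ n) :
    sSup {y : ℝ | ∃ p : X → ℝ, IsPolyDegLE n p ∧ (∀ z ∈ K, |p z| ≤ 1) ∧ y = p x} =
        (Polynomial.Chebyshev.T ℝ n).eval (genMinkowski K x) ∧
      ∃ v : X →L[ℝ] ℝ, ‖v‖ = 1 ∧
        IsPolyDegLE n (fun z => (Polynomial.Chebyshev.T ℝ n).eval
          ((2 * v z - suppFn K v + suppFn K (-v)) / (suppFn K v + suppFn K (-v)))) ∧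
        (∀ z ∈ K, |(Polynomial.Chebyshev.T ℝ n).eval
          ((2 * v z - suppFn K v + suppFn K (-v)) / (suppFn K v + suppFn K (-v)))| ≤ 1) ∧
        (Polynomial.Chebyshev.T ℝ n).eval
            ((2 * v x - suppFn K v + suppFn K (-v)) / (suppFn K v + suppFn K (-v))) =
          (Polynomial.Chebyshev.T ℝ n).eval (genMinkowski K x) :=
  chebyshev_convex_body_general K hconv hcl hbd hint x hx n
end
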